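/- arXiv:1511.08902 — 11 statements merged into one kernel-verified Lean document; each statement's English description precedes it below -/
import Mathlib

section
/- For every nonzero vector z ∈ ℂ³ there exist t ∈ [0,1], a nonzero complex number c, and A ∈ SO(3) such that z = c • (A (ε₁ + i·t·ε₂)). (Existence part of the classification of the orbits of ℂ^× · SO(3) on ℂ³ \ {0}, Proposition A.1 of the paper.) -/
/-!
Multiplying `z` by a suitable `u ≠ 0` makes the bilinear square `u² (z ⬝ᵥ z)` a nonnegative real.
Writing `u • z = a + i b` with `a, b` real, this says `a ⬝ᵥ b = 0` and `|b| ≤ |a|`, and `a ≠ 0`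
because `z ≠ 0`. So `a = r v` and `b = r t e` with `v, e` orthonormal, `r > 0` and
`t = |b| / |a| ∈ [0, 1]`; the rotation with columns `v, e, v ⨯₃ e` sends `ε₁ + i t ε₂` to
`(u • z) / r`.
-/

open Matrix

noncomputable section

/-- `SO(3)`: real 3×3 matrices with `AᵀA = 1` and `det A = 1`. -/
def SO3 (A : Matrix (Fin 3) (Fin 3) ℝ) : Prop := Aᵀ * A = 1 ∧ A.det = 1

/-- The action of a real 3×3 matrix on `ℂ³` by entrywise ℂ-linear extension. -/
def actC (A : Matrix (Fin 3) (Fin 3) ℝ) (z : Fin 3 → ℂ) : Fin 3 → ℂ :=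
  (A.map (fun a => (a : ℂ))).mulVec z

/-- The standard basis vectors of `ℂ³`. -/
def ε₁ : Fin 3 → ℂ := ![1, 0, 0]
def ε₂ : Fin 3 → ℂ := ![0, 1, 0]
def ε₃ : Fin 3 → ℂ := ![0, 0, 1]

lemma exists_pos_smul_unit {n : Type*} [Fintype n] {b : n → ℝ} (hb : b ≠ 0) :
    ∃ s : ℝ, 0 < s ∧ ∃ e : n → ℝ, e ⬝ᵥ e = 1 ∧ b = s • e := by
  have hbb : 0 < b ⬝ᵥ b :=
    (dotProduct_self_star_nonneg b).lt_of_ne' (dotProduct_self_eq_zero.not.mpr hb)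
  set s := √(b ⬝ᵥ b)
  have hs : 0 < s := Real.sqrt_pos.mpr hbb
  have hs2 : s ^ 2 = b ⬝ᵥ b := Real.sq_sqrt hbb.le
  refine ⟨s, hs, s⁻¹ • b, ?_, by rw [smul_inv_smul₀ hs.ne']⟩
  rw [smul_dotProduct, dotProduct_smul, smul_smul, ← hs2, smul_eq_mul]
  field_simp

lemma exists_nonneg_smul_unit_orthogonal {n : Type*} [Fintype n] [Nontrivial n] {v b : n → ℝ}
    (hvb : v ⬝ᵥ b = 0) :
    ∃ s : ℝ, 0 ≤ s ∧ ∃ e : n → ℝ, e ⬝ᵥ e = 1 ∧ v ⬝ᵥ e = 0 ∧ b = s • e := by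
  have h_normalize {c : n → ℝ} (hc : c ≠ 0) (hvc : v ⬝ᵥ c = 0) :
      ∃ s : ℝ, 0 < s ∧ ∃ e : n → ℝ, e ⬝ᵥ e = 1 ∧ v ⬝ᵥ e = 0 ∧ c = s • e := by
    obtain ⟨s, hs, e, he, rfl⟩ := exists_pos_smul_unit hc
    rw [dotProduct_smul, smul_eq_zero_iff_right hs.ne'] at hvc
    exact ⟨s, hs, e, he, hvc, rfl⟩
  by_cases hb : b = 0
  · obtain ⟨c, hc, hcv⟩ := exists_ne_zero_dotProduct_eq_zero v
    obtain ⟨-, -, e, he, hve, -⟩ := h_normalize hc (by rwa [dotProduct_comm])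
    exact ⟨0, le_rfl, e, he, hve, by simp [hb]⟩
  · obtain ⟨s, hs, he⟩ := h_normalize hb hvb
    exact ⟨s, hs.le, he⟩

lemma exists_SO3_transpose_eq {v e : Fin 3 → ℝ} (hv : v ⬝ᵥ v = 1) (he : e ⬝ᵥ e = 1)
    (hve : v ⬝ᵥ e = 0) : ∃ A : Matrix (Fin 3) (Fin 3) ℝ, SO3 A ∧ Aᵀ 0 = v ∧ Aᵀ 1 = e := by
  let M : Matrix (Fin 3) (Fin 3) ℝ := ![v, e, v ⨯₃ e]
  have hw : (v ⨯₃ e) ⬝ᵥ (v ⨯₃ e) = 1 := by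
    rw [cross_dot_cross, hv, he, hve, dotProduct_comm e v, hve]; ring
  refine ⟨Mᵀ, ⟨?_, ?_⟩, rfl, rfl⟩
  · rw [transpose_transpose]
    ext i j
    change M i ⬝ᵥ M j = (1 : Matrix (Fin 3) (Fin 3) ℝ) i j
    fin_cases i <;> fin_cases j <;>
      simp [M, hv, he, hve, hw, dotProduct_comm e v, dotProduct_comm (v ⨯₃ e),
        dot_self_cross, dot_cross_self]
  · rw [det_transpose, ← hw, triple_product_permutation, triple_product_eq_det]

lemma exists_SO3_of_dotProduct_eq_zero {a b : Fin 3 → ℝ} (ha : a ≠ 0) (hab : a ⬝ᵥ b = 0)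
    (hba : b ⬝ᵥ b ≤ a ⬝ᵥ a) :
    ∃ t ∈ Set.Icc (0 : ℝ) 1, ∃ r : ℝ, 0 < r ∧ ∃ A : Matrix (Fin 3) (Fin 3) ℝ, SO3 A ∧
      a = r • Aᵀ 0 ∧ b = (r * t) • Aᵀ 1 := by
  obtain ⟨r, hr, v, hv, rfl⟩ := exists_pos_smul_unit ha
  rw [smul_dotProduct, smul_eq_zero_iff_right hr.ne'] at hab
  obtain ⟨s, hs, e, he, hve, rfl⟩ := exists_nonneg_smul_unit_orthogonal hab
  have hsr : s ≤ r := by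
    simp only [smul_dotProduct, dotProduct_smul, he, hv, smul_eq_mul, mul_one] at hba
    nlinarith
  obtain ⟨A, hA, rfl, rfl⟩ := exists_SO3_transpose_eq hv he hve
  refine ⟨s / r, ⟨by positivity, (div_le_one hr).mpr hsr⟩, r, hr, A, hA, rfl, ?_⟩
  rw [mul_div_cancel₀ s hr.ne']

lemma dotProduct_self_re {n : Type*} [Fintype n] (w : n → ℂ) :
    (w ⬝ᵥ w).re =
      (Complex.re ∘ w) ⬝ᵥ (Complex.re ∘ w) - (Complex.im ∘ w) ⬝ᵥ (Complex.im ∘ w) := by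
  simp [dotProduct, Complex.re_sum, Finset.sum_sub_distrib]

lemma dotProduct_self_im {n : Type*} [Fintype n] (w : n → ℂ) :
    (w ⬝ᵥ w).im = 2 * ((Complex.re ∘ w) ⬝ᵥ (Complex.im ∘ w)) := by
  simp [dotProduct, Complex.im_sum, Finset.mul_sum]; ring_nf

open scoped ComplexOrder

lemma exists_ne_zero_sq_mul_nonneg (c : ℂ) : ∃ u : ℂ, u ≠ 0 ∧ 0 ≤ u ^ 2 * c := by
  rcases eq_or_ne c 0 with rfl | hc
  · exact ⟨1, one_ne_zero, by simp⟩
  obtain ⟨u, hu⟩ := IsAlgClosed.exists_pow_nat_eq (starRingEnd ℂ c) two_pos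
  refine ⟨u, ?_, ?_⟩
  · rintro rfl
    rw [zero_pow two_ne_zero, eq_comm, map_eq_zero] at hu
    exact hc hu
  · rw [hu]
    exact star_mul_self_nonneg c

lemma actC_add_smul_apply (A : Matrix (Fin 3) (Fin 3) ℝ) (s : ℂ) (j : Fin 3) :
    actC A (ε₁ + s • ε₂) j = A j 0 + s * A j 1 := by
  simp [actC, mulVec, dotProduct, Fin.sum_univ_three, ε₁, ε₂, mul_comm]

lemma exists_SO3_of_dotProduct_self_nonneg {w : Fin 3 → ℂ} (hw : w ≠ 0) (hww : 0 ≤ w ⬝ᵥ w) :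
    ∃ t ∈ Set.Icc (0 : ℝ) 1, ∃ r : ℝ, 0 < r ∧ ∃ A : Matrix (Fin 3) (Fin 3) ℝ, SO3 A ∧
      w = (r : ℂ) • actC A (ε₁ + (Complex.I * t) • ε₂) := by
  rw [Complex.nonneg_iff, dotProduct_self_re, dotProduct_self_im] at hww
  set a := Complex.re ∘ w
  set b := Complex.im ∘ w
  obtain ⟨hba, hab⟩ := hww
  have ha : a ≠ 0 := by
    rintro ha
    have hb : b = 0 := by
      rw [ha, zero_dotProduct] at hba
      exact dotProduct_self_eq_zero.mp (le_antisymm (by linarith) (dotProduct_self_star_nonneg b))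
    exact hw (funext fun j => Complex.ext (congrFun ha j) (congrFun hb j))
  obtain ⟨t, ht, r, hr, A, hA, har, hbr⟩ :=
    exists_SO3_of_dotProduct_eq_zero ha (by linarith) (by linarith)
  refine ⟨t, ht, r, hr, A, hA, funext fun j => Complex.ext ?_ ?_⟩
  · simpa [a, actC_add_smul_apply] using congrFun har j
  · simpa [b, actC_add_smul_apply, mul_assoc] using congrFun hbr j

theorem orbits_SO3_existence (z : Fin 3 → ℂ) (hz : z ≠ 0) :
    ∃ t : ℝ, t ∈ Set.Icc (0 : ℝ) 1 ∧ ∃ c : ℂ, c ≠ 0 ∧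
      ∃ A : Matrix (Fin 3) (Fin 3) ℝ, SO3 A ∧
        z = c • actC A (ε₁ + (Complex.I * (t : ℂ)) • ε₂) := by
  obtain ⟨u, hu, hnonneg⟩ := exists_ne_zero_sq_mul_nonneg (z ⬝ᵥ z)
  have huz : (u • z) ⬝ᵥ (u • z) = u ^ 2 * (z ⬝ᵥ z) := by
    rw [smul_dotProduct, dotProduct_smul, smul_smul, smul_eq_mul, sq]
  obtain ⟨t, ht, r, hr, A, hA, hw⟩ :=
    exists_SO3_of_dotProduct_self_nonneg (smul_ne_zero hu hz) (huz ▸ hnonneg)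
  refine ⟨t, ht, r / u, div_ne_zero (Complex.ofReal_ne_zero.mpr hr.ne') hu, A, hA, ?_⟩
  rw [div_eq_inv_mul, mul_smul, ← hw, inv_smul_smul₀ hu]
end
end

section
/- If t, t' ∈ [0,1], c is a nonzero complex number, A ∈ SO(3), and c • (A (ε₁ + i·t·ε₂)) = ε₁ + i·t'·ε₂, then t = t'. (Uniqueness part of the classification of the orbits of ℂ^× · SO(3) on ℂ³ \ {0}, Proposition A.1 of the paper.) -/
/-!
A real orthogonal matrix, acting on `ℂ³`, preserves both the bilinear form `z ⬝ᵥ z` and the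
Hermitian form `star z ⬝ᵥ z`. On `ε₁ + i t ε₂` these take the values `1 - t²` and `1 + t²`, so
`c² (1 - t²) = 1 - t'²` and `|c|² (1 + t²) = 1 + t'²`. Since `t, t' ≤ 1`, taking absolute values
in the first identity gives `|c|² (1 - t²) = 1 - t'²`; adding the two forces `|c| = 1`, whence
`t² = t'²`.
-/

open Matrix

noncomputable section

section Invariants

variable {n R : Type*} [Fintype n] [DecidableEq n] [CommSemiring R]

theorem Matrix.mulVec_dotProduct_mulVec_self {M : Matrix n n R} (hM : Mᵀ * M = 1)
    (v : n → R) : M *ᵥ v ⬝ᵥ M *ᵥ v = v ⬝ᵥ v := by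
  rw [dotProduct_mulVec, ← vecMul_transpose, vecMul_vecMul, hM, vecMul_one]

theorem Matrix.star_mulVec_dotProduct_mulVec_self [StarRing R] {M : Matrix n n R}
    (hM : Mᴴ * M = 1) (v : n → R) : star (M *ᵥ v) ⬝ᵥ M *ᵥ v = star v ⬝ᵥ v := by
  rw [dotProduct_mulVec, star_mulVec, vecMul_vecMul, hM, vecMul_one]

end Invariants

section Complexification

variable {m n : Type*}

theorem Matrix.conjTranspose_map_ofReal (A : Matrix m n ℝ) :
    (A.map ((↑) : ℝ → ℂ))ᴴ = (A.map (↑))ᵀ := by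
  ext i j
  simp

theorem Matrix.transpose_mul_self_map_ofReal [Fintype n] [DecidableEq n] {A : Matrix n n ℝ}
    (hA : Aᵀ * A = 1) : (A.map ((↑) : ℝ → ℂ))ᵀ * A.map (↑) = 1 := by
  have := congrArg (Matrix.map · Complex.ofRealHom) hA
  simp only [Matrix.map_mul, transpose_map, Matrix.map_one _ (map_zero _) (map_one _)] at this
  exact this

end Complexification

theorem Complex.norm_sq_mul_eq_of_sq_mul_eq {c : ℂ} {a b : ℝ} (ha : 0 ≤ a) (hb : 0 ≤ b)
    (h : c ^ 2 * a = b) : ‖c‖ ^ 2 * a = b := by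
  simpa [abs_of_nonneg ha, abs_of_nonneg hb] using congrArg norm h

theorem eq_of_mul_one_sub_sq_of_mul_one_add_sq {r t t' : ℝ} (ht : 0 ≤ t) (ht' : 0 ≤ t')
    (hsub : r * (1 - t ^ 2) = 1 - t' ^ 2) (hadd : r * (1 + t ^ 2) = 1 + t' ^ 2) : t = t' := by
  obtain rfl : r = 1 := by linarith
  exact (sq_eq_sq₀ ht ht').1 (by linarith)

section Action

variable {A : Matrix (Fin 3) (Fin 3) ℝ}

theorem smul_actC_dotProduct_self (hA : Aᵀ * A = 1) (c : ℂ) (z : Fin 3 → ℂ) :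
    c • actC A z ⬝ᵥ c • actC A z = c ^ 2 * (z ⬝ᵥ z) := by
  rw [smul_dotProduct, dotProduct_smul, actC,
    mulVec_dotProduct_mulVec_self (transpose_mul_self_map_ofReal hA), smul_smul, smul_eq_mul, sq]

theorem star_smul_actC_dotProduct_self (hA : Aᵀ * A = 1) (c : ℂ) (z : Fin 3 → ℂ) :
    star (c • actC A z) ⬝ᵥ c • actC A z = Complex.normSq c * (star z ⬝ᵥ z) := by
  have hM : (A.map ((↑) : ℝ → ℂ))ᴴ * A.map (↑) = 1 := by
    rw [conjTranspose_map_ofReal]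
    exact transpose_mul_self_map_ofReal hA
  rw [star_smul, smul_dotProduct, dotProduct_smul, actC, star_mulVec_dotProduct_mulVec_self hM,
    smul_smul, smul_eq_mul, Complex.normSq_eq_conj_mul_self]
  rfl

end Action

theorem ε₁_add_smul_ε₂ (a : ℂ) : ε₁ + a • ε₂ = ![1, a, 0] := by
  ext i
  fin_cases i <;> simp [ε₁, ε₂]

theorem dotProduct_self_ε₁_add_I_mul_smul_ε₂ (t : ℝ) :
    (ε₁ + (Complex.I * t) • ε₂) ⬝ᵥ (ε₁ + (Complex.I * t) • ε₂) = 1 - (t : ℂ) ^ 2 := by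
  rw [ε₁_add_smul_ε₂, vec3_dotProduct']
  linear_combination (t : ℂ) ^ 2 * Complex.I_sq

theorem star_dotProduct_self_ε₁_add_I_mul_smul_ε₂ (t : ℝ) :
    star (ε₁ + (Complex.I * t) • ε₂) ⬝ᵥ (ε₁ + (Complex.I * t) • ε₂) = 1 + (t : ℂ) ^ 2 := by
  rw [ε₁_add_smul_ε₂, vec3_dotProduct]
  simp only [Pi.star_apply, cons_val_zero, cons_val_one, cons_val_two, tail_cons, head_cons,
    star_one, star_mul', Complex.star_def, Complex.conj_I, Complex.conj_ofReal, map_zero]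
  linear_combination -(t : ℂ) ^ 2 * Complex.I_sq

theorem orbits_SO3_uniqueness_general (t t' : ℝ) (ht : t ∈ Set.Icc (0 : ℝ) 1)
    (ht' : t' ∈ Set.Icc (0 : ℝ) 1) (c : ℂ)
    (A : Matrix (Fin 3) (Fin 3) ℝ) (hA : SO3 A)
    (h : c • actC A (ε₁ + (Complex.I * (t : ℂ)) • ε₂) = ε₁ + (Complex.I * (t' : ℂ)) • ε₂) :
    t = t' := by
  have hsub := congrArg (fun z => z ⬝ᵥ z) h
  have hadd := congrArg (fun z => star z ⬝ᵥ z) h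
  simp only [smul_actC_dotProduct_self hA.1, star_smul_actC_dotProduct_self hA.1,
    dotProduct_self_ε₁_add_I_mul_smul_ε₂, star_dotProduct_self_ε₁_add_I_mul_smul_ε₂] at hsub hadd
  have hsub' : ‖c‖ ^ 2 * (1 - t ^ 2) = 1 - t' ^ 2 :=
    Complex.norm_sq_mul_eq_of_sq_mul_eq (sub_nonneg.2 (pow_le_one₀ ht.1 ht.2))
      (sub_nonneg.2 (pow_le_one₀ ht'.1 ht'.2)) (by exact_mod_cast hsub)
  have hadd' : ‖c‖ ^ 2 * (1 + t ^ 2) = 1 + t' ^ 2 := by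
    rw [← Complex.normSq_eq_norm_sq]
    exact_mod_cast hadd
  exact eq_of_mul_one_sub_sq_of_mul_one_add_sq ht.1 ht'.1 hsub' hadd'

theorem orbits_SO3_uniqueness (t t' : ℝ) (ht : t ∈ Set.Icc (0 : ℝ) 1)
    (ht' : t' ∈ Set.Icc (0 : ℝ) 1) (c : ℂ) (hc : c ≠ 0)
    (A : Matrix (Fin 3) (Fin 3) ℝ) (hA : SO3 A)
    (h : c • actC A (ε₁ + (Complex.I * (t : ℂ)) • ε₂) = ε₁ + (Complex.I * (t' : ℂ)) • ε₂) :
    t = t' :=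
  orbits_SO3_uniqueness_general t t' ht ht' c A hA h
end
end

section
/- Let 0 < t < 1. If c is a nonzero complex number, A ∈ SO(3), and c • (A (ε₁ + i·t·ε₂)) = ε₁ + i·t·ε₂, then either c = 1 and A is the identity matrix, or c = −1 and A = diag(−1,−1,1). (Stabilizer computation for the generic canonical form in Proposition A.1: the stabilizer of ε₁ + i t ε₂ in ℂ^× × SO(3) is a group of order two.) -/
/-!
STATEMENT 2 (Proposition A.1 of the paper, stabilizer of the generic canonical form):
Let `0 < t < 1`. If `c ≠ 0` complex, `A ∈ SO(3)`, and
`c • (A (ε₁ + i·t·ε₂)) = ε₁ + i·t·ε₂`, then either `c = 1` and `A = 1`,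
or `c = −1` and `A = diag(−1,−1,1)`.
-/

open Matrix

noncomputable section

/-! A real orthogonal matrix preserves the complex bilinear form `z ⬝ᵥ w` on `ℂ³`, and
`v = ε₁ + i t ε₂` satisfies `v ⬝ᵥ v = 1 - t² ≠ 0`, so `c • A v = v` forces `c² = 1`. Thus `c = ±1`
is real, and comparing real and imaginary parts of `c • A v = v` (using `t ≠ 0`) shows that `A`
maps `e₁, e₂` to `c e₁, c e₂`; orthogonality and `det A = 1` then leave `A = diag(c, c, 1)`. -/

theorem Matrix.dotProduct_mulVec_mulVec_of_transpose_mul_self {n R : Type*} [Fintype n]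
    [DecidableEq n] [CommRing R] {M : Matrix n n R} (hM : Mᵀ * M = 1) (z w : n → R) :
    (M *ᵥ z) ⬝ᵥ (M *ᵥ w) = z ⬝ᵥ w := by
  rw [dotProduct_mulVec, ← vecMul_transpose, vecMul_vecMul, hM, vecMul_one]

theorem Matrix.sq_eq_one_of_smul_mulVec_eq {n R : Type*} [Fintype n] [DecidableEq n]
    [CommRing R] [IsDomain R] {M : Matrix n n R} (hM : Mᵀ * M = 1) {v : n → R}
    (hv : v ⬝ᵥ v ≠ 0) {c : R} (h : c • (M *ᵥ v) = v) : c ^ 2 = 1 := by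
  refine mul_right_cancel₀ hv ?_
  calc c ^ 2 * (v ⬝ᵥ v) = (c • (M *ᵥ v)) ⬝ᵥ (c • (M *ᵥ v)) := by
        rw [smul_dotProduct, dotProduct_smul, dotProduct_mulVec_mulVec_of_transpose_mul_self hM]
        simp only [smul_eq_mul]; ring
    _ = 1 * (v ⬝ᵥ v) := by rw [h, one_mul]

theorem Matrix.map_ofReal_transpose_mul_self {n : Type*} [Fintype n] [DecidableEq n]
    {A : Matrix n n ℝ} (hA : Aᵀ * A = 1) : (A.map ((↑) : ℝ → ℂ))ᵀ * A.map (↑) = 1 := by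
  have h := congrArg Complex.ofRealHom.mapMatrix hA
  rw [RingHom.map_one, RingHom.mapMatrix_apply, Matrix.map_mul] at h
  exact h

theorem Matrix.map_ofReal_mulVec_ofReal {m n : Type*} [Fintype n] (A : Matrix m n ℝ)
    (x : n → ℝ) : A.map ((↑) : ℝ → ℂ) *ᵥ (fun i => (x i : ℂ)) = fun i => ((A *ᵥ x) i : ℂ) := by
  funext i
  exact (RingHom.map_mulVec Complex.ofRealHom A x i).symm

theorem eq_of_ofReal_add_I_mul_smul_ofReal_eq {ι : Type*} {t : ℝ} (ht : t ≠ 0)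
    {x y x' y' : ι → ℝ}
    (h : (fun i => (x i : ℂ)) + (Complex.I * t) • (fun i => (y i : ℂ)) =
      (fun i => (x' i : ℂ)) + (Complex.I * t) • (fun i => (y' i : ℂ))) :
    x = x' ∧ y = y' := by
  have hi : ∀ i, x i = x' i ∧ y i = y' i := fun i => by
    simpa [Complex.ext_iff, ht] using congrFun h i
  exact ⟨funext fun i => (hi i).1, funext fun i => (hi i).2⟩

theorem smul_mulVec_eq_of_smul_map_ofReal_mulVec_eq {n : Type*} [Fintype n]
    {A : Matrix n n ℝ} {s t : ℝ} (ht : t ≠ 0) {x y : n → ℝ}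
    (h : (s : ℂ) • (A.map (↑) *ᵥ ((fun i => (x i : ℂ)) + (Complex.I * t) • fun i => (y i : ℂ))) =
      (fun i => (x i : ℂ)) + (Complex.I * t) • fun i => (y i : ℂ)) :
    s • (A *ᵥ x) = x ∧ s • (A *ᵥ y) = y := by
  refine eq_of_ofReal_add_I_mul_smul_ofReal_eq ht (Eq.trans ?_ h)
  rw [mulVec_add, mulVec_smul, map_ofReal_mulVec_ofReal, map_ofReal_mulVec_ofReal, smul_add,
    smul_comm]
  funext i
  simp

theorem ε₁_eq_ofReal : ε₁ = fun i => ((![1, 0, 0] : Fin 3 → ℝ) i : ℂ) := by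
  funext i; fin_cases i <;> simp [ε₁]

theorem ε₂_eq_ofReal : ε₂ = fun i => ((![0, 1, 0] : Fin 3 → ℝ) i : ℂ) := by
  funext i; fin_cases i <;> simp [ε₂]

theorem dotProduct_self_ε₁_add_smul_ε₂ (z : ℂ) :
    (ε₁ + z • ε₂) ⬝ᵥ (ε₁ + z • ε₂) = 1 + z ^ 2 := by
  simp [ε₁, ε₂, dotProduct, Fin.sum_univ_three]; ring

theorem SO3.eq_diagonal_of_smul_mulVec {A : Matrix (Fin 3) (Fin 3) ℝ} (hA : SO3 A) {s : ℝ}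
    (hs : s ^ 2 = 1) (h₁ : s • (A *ᵥ ![1, 0, 0]) = ![1, 0, 0])
    (h₂ : s • (A *ᵥ ![0, 1, 0]) = ![0, 1, 0]) : A = diagonal ![s, s, 1] := by
  obtain ⟨hO, hdet⟩ := hA
  have col : ∀ i, A i 0 = s * ![1, 0, 0] i ∧ A i 1 = s * ![0, 1, 0] i := fun i => by
    have e₁ := congrFun h₁ i
    have e₂ := congrFun h₂ i
    simp only [Pi.smul_apply, mulVec, dotProduct, Fin.sum_univ_three, cons_val_zero, mul_one,
      cons_val_one, mul_zero, add_zero, cons_val, smul_eq_mul, Nat.succ_eq_add_one, Nat.reduceAdd,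
      zero_add] at e₁ e₂
    constructor
    · linear_combination s * e₁ - A i 0 * hs
    · linear_combination s * e₂ - A i 1 * hs
  obtain ⟨a00, a01⟩ := col 0
  obtain ⟨a10, a11⟩ := col 1
  obtain ⟨a20, a21⟩ := col 2
  simp only [cons_val_zero, cons_val_one, cons_val_two, mul_one, mul_zero]
    at a00 a01 a10 a11 a20 a21
  have hs0 : s ≠ 0 := by rintro rfl; norm_num at hs
  have o02 := congrFun (congrFun hO 0) 2
  have o12 := congrFun (congrFun hO 1) 2
  simp only [mul_apply, transpose_apply, Fin.sum_univ_three, a00, a10, zero_mul, add_zero, a20,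
    Nat.succ_eq_add_one, Nat.reduceAdd, tail_cons, head_cons, mul_zero, ne_eq, Fin.reduceEq,
    not_false_eq_true, one_apply_ne, mul_eq_zero, hs0, false_or, a01, a11, zero_add, a21] at o02 o12
  rw [det_fin_three, a00, a10, a20, a01, a11, a21, o02, o12] at hdet
  have a22 : A 2 2 = 1 := by linear_combination hdet - A 2 2 * hs
  ext i j
  fin_cases i <;> fin_cases j <;> simp [a00, a10, a20, a01, a11, a21, o02, o12, a22]

theorem SO3.eq_diagonal_of_smul_actC {A : Matrix (Fin 3) (Fin 3) ℝ} (hA : SO3 A) {s t : ℝ}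
    (hs : s ^ 2 = 1) (ht : t ≠ 0)
    (h : (s : ℂ) • actC A (ε₁ + (Complex.I * t) • ε₂) = ε₁ + (Complex.I * t) • ε₂) :
    A = diagonal ![s, s, 1] := by
  rw [ε₁_eq_ofReal, ε₂_eq_ofReal] at h
  obtain ⟨h₁, h₂⟩ := smul_mulVec_eq_of_smul_map_ofReal_mulVec_eq ht h
  exact hA.eq_diagonal_of_smul_mulVec hs h₁ h₂

theorem stabilizer_generic_SO3_general (t : ℝ) (ht0 : 0 < t) (ht1 : t < 1)
    (c : ℂ) (A : Matrix (Fin 3) (Fin 3) ℝ) (hA : SO3 A)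
    (h : c • actC A (ε₁ + (Complex.I * (t : ℂ)) • ε₂) = ε₁ + (Complex.I * (t : ℂ)) • ε₂) :
    (c = 1 ∧ A = 1) ∨ (c = -1 ∧ A = Matrix.diagonal ![-1, -1, 1]) := by
  have hv : (ε₁ + (Complex.I * t) • ε₂) ⬝ᵥ (ε₁ + (Complex.I * t) • ε₂) ≠ 0 := by
    rw [dotProduct_self_ε₁_add_smul_ε₂, mul_pow, Complex.I_sq]
    exact_mod_cast (by nlinarith : (1 + -1 * t ^ 2 : ℝ) ≠ 0)
  have hc : c ^ 2 = 1 := sq_eq_one_of_smul_mulVec_eq (map_ofReal_transpose_mul_self hA.1) hv h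
  rcases sq_eq_one_iff.mp hc with rfl | rfl
  · refine .inl ⟨rfl, ?_⟩
    have hdiag : ![(1 : ℝ), 1, 1] = 1 := by ext i; fin_cases i <;> rfl
    simpa [hdiag] using hA.eq_diagonal_of_smul_actC (s := 1) (one_pow 2) ht0.ne' (by simpa using h)
  · refine .inr ⟨rfl, hA.eq_diagonal_of_smul_actC (by norm_num) ht0.ne' (by simpa using h)⟩

theorem stabilizer_generic_SO3 (t : ℝ) (ht0 : 0 < t) (ht1 : t < 1)
    (c : ℂ) (hc : c ≠ 0) (A : Matrix (Fin 3) (Fin 3) ℝ) (hA : SO3 A)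
    (h : c • actC A (ε₁ + (Complex.I * (t : ℂ)) • ε₂) = ε₁ + (Complex.I * (t : ℂ)) • ε₂) :
    (c = 1 ∧ A = 1) ∨ (c = -1 ∧ A = Matrix.diagonal ![-1, -1, 1]) :=
  stabilizer_generic_SO3_general t ht0 ht1 c A hA h
end
end

section
/- Let x, y ∈ ℝ³ be linearly independent and set z = x + i·y ∈ ℂ³, t₁ = ⟨x,y⟩/⟨x,x⟩, and t₂ = √(⟨y − t₁x, y − t₁x⟩/⟨x,x⟩). Then t₂ > 0 and there exist a nonzero real number r and A ∈ SO(3) with r • (A z) = (1 + i·t₁)·ε₁ + i·t₂·ε₂; moreover, if r' is a nonzero real number, A' ∈ SO(3), t₁' ∈ ℝ and t₂' > 0 satisfy r' • (A' z) = (1 + i·t₁')·ε₁ + i·t₂'·ε₂, then t₁' = t₁ and t₂' = t₂. (Classification, with explicit invariants, of the orbits of ℝ^× · SO(3) on vectors z = x + iy with x, y linearly independent, equations (A.2) and (A.4) in the proof of Proposition A.1.) -/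
/-!
STATEMENT 4 (equations (A.2) and (A.4) in the proof of Proposition A.1 of the paper):
Classification with explicit invariants of the orbits of `ℝ^× · SO(3)` on vectors
`z = x + iy` with `x, y ∈ ℝ³` linearly independent.
-/

open Matrix

noncomputable section

/-- The standard Euclidean inner product on `ℝ³`. -/
def ip (u v : Fin 3 → ℝ) : ℝ := ∑ j, u j * v j

/-!
The numbers `t₁ = ⟨x, y⟩ / ⟨x, x⟩` and `t₂ = |y - t₁ x| / |x|` depend only on the Gram matrix
of `(x, y)` and are homogeneous of degree zero, so they are invariant under `ℝ^× · O(3)`; on the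
normal form `(e₁, t₁ e₁ + t₂ e₂)` with `t₂ ≥ 0` they return `(t₁, t₂)`, which gives uniqueness.
For existence, Gram–Schmidt turns `(x, y)` into an orthonormal pair `(a, b)`, and the rotation
with rows `a, b, a × b` followed by the scaling `1 / |x|` moves `(x, y)` to the normal form.
Since `A` and `r` are real, `r • A z = (1 + i t₁) ε₁ + i t₂ ε₂` splits into real and imaginary
parts `r A x = e₁`, `r A y = (t₁, t₂, 0)`.
-/

theorem dotProduct_self_pos {n R : Type*} [Fintype n] [Ring R] [LinearOrder R]
    [IsStrictOrderedRing R] {v : n → R} (hv : v ≠ 0) : 0 < v ⬝ᵥ v :=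
  (Finset.sum_nonneg fun i _ => mul_self_nonneg (v i)).lt_of_ne'
    (dotProduct_self_eq_zero.not.mpr hv)

theorem dotProduct_self_inv_sqrt_smul {n : Type*} [Fintype n] {v : n → ℝ} (hv : v ≠ 0) :
    (√(v ⬝ᵥ v))⁻¹ • v ⬝ᵥ (√(v ⬝ᵥ v))⁻¹ • v = 1 := by
  have hpos := dotProduct_self_pos hv
  rw [smul_dotProduct, dotProduct_smul, smul_eq_mul, smul_eq_mul, ← mul_assoc, ← mul_inv,
    Real.mul_self_sqrt hpos.le, inv_mul_cancel₀ hpos.ne']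

theorem dotProduct_mulVec_mulVec {m n R : Type*} [Fintype m] [Fintype n] [DecidableEq n]
    [CommSemiring R] {A : Matrix m n R} (hA : Aᵀ * A = 1) (u v : n → R) :
    A *ᵥ u ⬝ᵥ A *ᵥ v = u ⬝ᵥ v := by
  rw [dotProduct_mulVec, ← vecMul_transpose, vecMul_vecMul, hA, vecMul_one]

section OrthonormalFrame

variable {a b : Fin 3 → ℝ}

theorem SO3_of_orthonormal (ha : a ⬝ᵥ a = 1) (hb : b ⬝ᵥ b = 1) (hab : a ⬝ᵥ b = 0) :
    SO3 (of ![a, b, a ⨯₃ b]) := by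
  have hc : a ⨯₃ b ⬝ᵥ a ⨯₃ b = 1 := by
    rw [cross_dot_cross, ha, hb, hab, dotProduct_comm b a, hab]; norm_num
  refine ⟨mul_eq_one_comm.mp ?_, ?_⟩
  · ext i j
    change ![a, b, a ⨯₃ b] i ⬝ᵥ ![a, b, a ⨯₃ b] j = (1 : Matrix (Fin 3) (Fin 3) ℝ) i j
    fin_cases i <;> fin_cases j <;>
      simp [hc, ha, hb, hab, dotProduct_comm b a, dot_self_cross, dot_cross_self,
        dotProduct_comm (a ⨯₃ b)]
  · change det ![a, b, a ⨯₃ b] = 1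
    rw [← triple_product_eq_det, ← triple_product_permutation, hc]

theorem of_orthonormal_mulVec_left (ha : a ⬝ᵥ a = 1) (hab : a ⬝ᵥ b = 0) :
    of ![a, b, a ⨯₃ b] *ᵥ a = ![1, 0, 0] := by
  simp [cons_mulVec, ha, dotProduct_comm b a, hab, dotProduct_comm (a ⨯₃ b), dot_self_cross]

theorem of_orthonormal_mulVec_right (hb : b ⬝ᵥ b = 1) (hab : a ⬝ᵥ b = 0) :
    of ![a, b, a ⨯₃ b] *ᵥ b = ![0, 1, 0] := by
  simp [cons_mulVec, hb, hab, dotProduct_comm (a ⨯₃ b), dot_cross_self]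

end OrthonormalFrame

section Rejection

variable {n K : Type*} [Fintype n] [Field K]

def projCoeff (x y : n → K) : K := x ⬝ᵥ y / x ⬝ᵥ x

def rejection (x y : n → K) : n → K := y - projCoeff x y • x

theorem dotProduct_rejection {x : n → K} (hx : x ⬝ᵥ x ≠ 0) (y : n → K) :
    x ⬝ᵥ rejection x y = 0 := by
  rw [rejection, dotProduct_sub, dotProduct_smul, projCoeff, smul_eq_mul, div_mul_cancel₀ _ hx,
    sub_self]

theorem rejection_ne_zero {x y : n → K} (h : LinearIndependent K ![x, y]) :
    rejection x y ≠ 0 := fun h0 =>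
  one_ne_zero (LinearIndependent.pair_iff.mp h (-projCoeff x y) 1
    (by rw [← h0, rejection]; module)).2

theorem projCoeff_smul {r : K} (hr : r ≠ 0) (x y : n → K) :
    projCoeff (r • x) (r • y) = projCoeff x y := by
  simp only [projCoeff, smul_dotProduct, dotProduct_smul, smul_eq_mul, ← mul_assoc,
    mul_div_mul_left _ _ (mul_ne_zero hr hr)]

theorem rejection_smul {r : K} (hr : r ≠ 0) (x y : n → K) :
    rejection (r • x) (r • y) = r • rejection x y := by
  rw [rejection, rejection, projCoeff_smul hr, smul_sub, smul_comm]

variable {m : Type*} [Fintype m] [DecidableEq n] {A : Matrix m n K}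

theorem projCoeff_mulVec (hA : Aᵀ * A = 1) (x y : n → K) :
    projCoeff (A *ᵥ x) (A *ᵥ y) = projCoeff x y := by
  simp only [projCoeff, dotProduct_mulVec_mulVec hA]

theorem rejection_mulVec (hA : Aᵀ * A = 1) (x y : n → K) :
    rejection (A *ᵥ x) (A *ᵥ y) = A *ᵥ rejection x y := by
  rw [rejection, rejection, projCoeff_mulVec hA, mulVec_sub, mulVec_smul]

end Rejection

section Invariants

variable {n : Type*} [Fintype n]

def orbitInvariants (x y : n → ℝ) : ℝ × ℝ :=
  (projCoeff x y, √(rejection x y ⬝ᵥ rejection x y / x ⬝ᵥ x))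

theorem orbitInvariants_smul {r : ℝ} (hr : r ≠ 0) (x y : n → ℝ) :
    orbitInvariants (r • x) (r • y) = orbitInvariants x y := by
  simp only [orbitInvariants, projCoeff_smul hr, rejection_smul hr, smul_dotProduct,
    dotProduct_smul, smul_eq_mul, ← mul_assoc, mul_div_mul_left _ _ (mul_ne_zero hr hr)]

theorem orbitInvariants_mulVec {m : Type*} [Fintype m] [DecidableEq n] {A : Matrix m n ℝ}
    (hA : Aᵀ * A = 1) (x y : n → ℝ) :
    orbitInvariants (A *ᵥ x) (A *ᵥ y) = orbitInvariants x y := by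
  simp only [orbitInvariants, projCoeff_mulVec hA, rejection_mulVec hA,
    dotProduct_mulVec_mulVec hA]

theorem orbitInvariants_snd_pos {x y : n → ℝ} (h : LinearIndependent ℝ ![x, y]) :
    0 < (orbitInvariants x y).2 :=
  Real.sqrt_pos.mpr <| div_pos (dotProduct_self_pos (rejection_ne_zero h))
    (dotProduct_self_pos (h.ne_zero 0))

end Invariants

theorem orbitInvariants_normalForm (t₁ : ℝ) {t₂ : ℝ} (ht₂ : 0 ≤ t₂) :
    orbitInvariants ![1, 0, 0] ![t₁, t₂, 0] = (t₁, t₂) := by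
  have hrej : rejection ![1, 0, 0] ![t₁, t₂, 0] = ![0, t₂, 0] := by
    ext j; fin_cases j <;> simp [rejection, projCoeff, dotProduct, Fin.sum_univ_three]
  simp [orbitInvariants, hrej, projCoeff, dotProduct, Fin.sum_univ_three, ht₂]

theorem orbitInvariants_eq_of_smul_mulVec_eq {n : Type*} [Fintype n] [DecidableEq n]
    {A : Matrix (Fin 3) n ℝ} (hA : Aᵀ * A = 1) {r : ℝ} (hr : r ≠ 0) {x y : n → ℝ} {t₁ t₂ : ℝ}
    (ht₂ : 0 ≤ t₂) (hx : r • A *ᵥ x = ![1, 0, 0]) (hy : r • A *ᵥ y = ![t₁, t₂, 0]) :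
    orbitInvariants x y = (t₁, t₂) := by
  rw [← orbitInvariants_normalForm t₁ ht₂, ← hx, ← hy, orbitInvariants_smul hr,
    orbitInvariants_mulVec hA]

theorem exists_SO3_smul_mulVec_eq {x y : Fin 3 → ℝ} (h : LinearIndependent ℝ ![x, y]) :
    ∃ r : ℝ, r ≠ 0 ∧ ∃ A : Matrix (Fin 3) (Fin 3) ℝ, SO3 A ∧ r • A *ᵥ x = ![1, 0, 0] ∧
      r • A *ᵥ y = ![(orbitInvariants x y).1, (orbitInvariants x y).2, 0] := by
  set w := rejection x y with hw_def
  have hx : x ≠ 0 := h.ne_zero 0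
  have hw : w ≠ 0 := rejection_ne_zero h
  set c := √(x ⬝ᵥ x)
  set d := √(w ⬝ᵥ w)
  have hc : 0 < c := Real.sqrt_pos.mpr (dotProduct_self_pos hx)
  have hd : 0 < d := Real.sqrt_pos.mpr (dotProduct_self_pos hw)
  set a := c⁻¹ • x
  set b := d⁻¹ • w
  have ha : a ⬝ᵥ a = 1 := dotProduct_self_inv_sqrt_smul hx
  have hb : b ⬝ᵥ b = 1 := dotProduct_self_inv_sqrt_smul hw
  have hab : a ⬝ᵥ b = 0 := by
    simp only [a, b, smul_dotProduct, dotProduct_smul, w,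
      dotProduct_rejection (dotProduct_self_pos hx).ne', smul_zero]
  have hxa : x = c • a := (smul_inv_smul₀ hc.ne' x).symm
  have hya : y = (projCoeff x y * c) • a + d • b := by
    rw [mul_smul, ← hxa, smul_inv_smul₀ hd.ne', hw_def, rejection, add_sub_cancel]
  have ht₁ : (orbitInvariants x y).1 = projCoeff x y := rfl
  have ht₂ : (orbitInvariants x y).2 = c⁻¹ * d := by
    rw [orbitInvariants, Real.sqrt_div' _ (dotProduct_self_pos hx).le, div_eq_inv_mul]
  rw [ht₁, ht₂]
  clear_value a b c d
  generalize projCoeff x y = t at hya ⊢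
  refine ⟨c⁻¹, inv_ne_zero hc.ne', _, SO3_of_orthonormal ha hb hab, ?_, ?_⟩
  · rw [hxa, mulVec_smul, of_orthonormal_mulVec_left ha hab, smul_smul, inv_mul_cancel₀ hc.ne',
      one_smul]
  · rw [hya, mulVec_add, mulVec_smul, mulVec_smul, of_orthonormal_mulVec_left ha hab,
      of_orthonormal_mulVec_right hb hab]
    ext j
    fin_cases j <;> simp [mul_comm t c, hc.ne']

section RealAndImaginaryParts

open Complex

theorem ofReal_add_I_mul_inj {ι : Type*} {u v u' v' : ι → ℝ} :
    (fun j => (u j : ℂ) + I * v j) = (fun j => (u' j : ℂ) + I * v' j) ↔ u = u' ∧ v = v' := by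
  simp only [funext_iff, Complex.ext_iff, add_re, add_im, ofReal_re, ofReal_im, mul_re, mul_im,
    I_re, I_im]
  simp [forall_and]

theorem smul_actC_ofReal_add_I_mul (r : ℝ) (A : Matrix (Fin 3) (Fin 3) ℝ) (x y : Fin 3 → ℝ) :
    r • actC A (fun j => (x j : ℂ) + I * y j)
      = fun j => ((r • A *ᵥ x) j : ℂ) + I * ((r • A *ᵥ y) j : ℂ) := by
  ext j
  simp only [actC, mulVec, dotProduct, Pi.smul_apply, map_apply, smul_eq_mul, real_smul]
  push_cast
  simp only [Finset.mul_sum, ← Finset.sum_add_distrib]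
  exact Finset.sum_congr rfl fun k _ => by ring

theorem smul_ε₁_add_smul_ε₂ (t₁ t₂ : ℝ) :
    (1 + I * t₁) • ε₁ + (I * t₂) • ε₂
      = fun j => ((![1, 0, 0] : Fin 3 → ℝ) j : ℂ) + I * ((![t₁, t₂, 0] : Fin 3 → ℝ) j : ℂ) := by
  ext j
  fin_cases j <;> simp [ε₁, ε₂]

theorem smul_actC_eq_normalForm_iff {r : ℝ} {A : Matrix (Fin 3) (Fin 3) ℝ} {x y : Fin 3 → ℝ}
    {t₁ t₂ : ℝ} :
    r • actC A (fun j => (x j : ℂ) + I * (y j : ℂ)) = (1 + I * (t₁ : ℂ)) • ε₁ + (I * (t₂ : ℂ)) • ε₂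
      ↔ r • A *ᵥ x = ![1, 0, 0] ∧ r • A *ᵥ y = ![t₁, t₂, 0] := by
  rw [smul_actC_ofReal_add_I_mul, smul_ε₁_add_smul_ε₂, ofReal_add_I_mul_inj]

end RealAndImaginaryParts

theorem orbits_RxSO3_linearly_independent (x y : Fin 3 → ℝ)
    (hxy : LinearIndependent ℝ ![x, y]) :
    let z : Fin 3 → ℂ := fun j => (x j : ℂ) + Complex.I * (y j : ℂ)
    let t₁ : ℝ := ip x y / ip x x
    let t₂ : ℝ := Real.sqrt (ip (y - t₁ • x) (y - t₁ • x) / ip x x)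
    0 < t₂ ∧
    (∃ r : ℝ, r ≠ 0 ∧ ∃ A : Matrix (Fin 3) (Fin 3) ℝ, SO3 A ∧
      r • actC A z = (1 + Complex.I * (t₁ : ℂ)) • ε₁ + (Complex.I * (t₂ : ℂ)) • ε₂) ∧
    (∀ r' : ℝ, r' ≠ 0 → ∀ A' : Matrix (Fin 3) (Fin 3) ℝ, SO3 A' →
      ∀ t₁' t₂' : ℝ, 0 < t₂' →
        r' • actC A' z = (1 + Complex.I * (t₁' : ℂ)) • ε₁ + (Complex.I * (t₂' : ℂ)) • ε₂ →
        t₁' = t₁ ∧ t₂' = t₂) := by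
  intro z t₁ t₂
  have ht : orbitInvariants x y = (t₁, t₂) := rfl
  refine ⟨orbitInvariants_snd_pos hxy, ?_, ?_⟩
  · simp only [z, smul_actC_eq_normalForm_iff]
    exact exists_SO3_smul_mulVec_eq hxy
  · intro r hr A hA s₁ s₂ hs₂ h
    rw [smul_actC_eq_normalForm_iff] at h
    exact Prod.mk.inj ((orbitInvariants_eq_of_smul_mulVec_eq hA.1 hr hs₂.le h.1 h.2).symm.trans ht)
end
end

section
/- For every nonzero vector z ∈ ℂ³ there exist a nonzero complex number c and A ∈ SO⁺(2,1) such that c • (A z) belongs to the canonical set C = { ε₁ + i·t·ε₂ : t ∈ [−1,1] } ∪ { (ε₁+ε₃) + i·( t·(ε₁+ε₃) + (ε₁−ε₃) ) : t ∈ ℝ } ∪ { ε₁+ε₃+i·ε₂, ε₁+ε₃−i·ε₂ } ∪ { ε₃ } ∪ { ε₁+ε₃ }. (Existence part of the classification of the orbits of ℂ^× · SO⁺(2,1) on ℂ³ \ {0}, Proposition A.2 of the paper.) -/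
/-!
STATEMENT 5 (Proposition A.2 of the paper, existence part):
For every nonzero `z ∈ ℂ³` there exist a nonzero complex number `c` and
`A ∈ SO⁺(2,1)` such that `c • (A z)` belongs to the canonical set `C`.
-/

open Matrix

noncomputable section

/-- `η = diag(1,1,−1)`. -/
def η : Matrix (Fin 3) (Fin 3) ℝ := Matrix.diagonal ![1, 1, -1]

/-- `SO⁺(2,1)`: real 3×3 matrices with `Aᵀ η A = η`, `det A = 1` and `A₃₃ > 0`. -/
def SOplus21 (A : Matrix (Fin 3) (Fin 3) ℝ) : Prop :=
  Aᵀ * η * A = η ∧ A.det = 1 ∧ 0 < A 2 2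

/-- The canonical set of representatives of Proposition A.2. -/
def canonSet : Set (Fin 3 → ℂ) :=
  {w | (∃ t ∈ Set.Icc (-1 : ℝ) 1, w = ε₁ + (Complex.I * (t : ℂ)) • ε₂) ∨
       (∃ t : ℝ, w = (ε₁ + ε₃) + Complex.I • ((t : ℂ) • (ε₁ + ε₃) + (ε₁ - ε₃))) ∨
       w = ε₁ + ε₃ + Complex.I • ε₂ ∨
       w = ε₁ + ε₃ - Complex.I • ε₂ ∨
       w = ε₃ ∨
       w = ε₁ + ε₃}

/-!
Write `z = x + i y` with `x y : ℝ³` and let `q` be the Lorentz form of signature `(2,1)`.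
Multiplying `z` by `c` with `c² = conj (q z)` makes `q z = q x - q y + 2 i b(x, y)` real and
nonnegative, i.e. `x ⊥ y` and `q y ≤ q x`. Then `x` cannot be timelike, since the orthogonal
complement of a timelike vector is spacelike. If `x` is spacelike, `SO⁺(2,1)` moves it to a
multiple of `ε₁`, and the boosts in the `(2,3)`-plane fixing `ε₁` (together with `z ↦ η z`) bring
`y` to `t ε₂` with `|t| ≤ 1`, to `±ε₂ - ε₃`, or to `u ε₃` with `u < 0`; the last case is carried
onto the one-parameter family by a boost in the `(1,3)`-plane. If `x` is null, either `x = 0` or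
`y` is a real multiple of `x`; either way `z` is a complex multiple of a real timelike or null
vector, which `SO⁺(2,1)` moves to a multiple of `ε₃` or of `ε₁ + ε₃`.
-/

lemma η_eq : η = !![1, 0, 0; 0, 1, 0; 0, 0, -1] := by
  ext i j
  fin_cases i <;> fin_cases j <;> rfl

lemma η_mul_η : η * η = 1 := by
  rw [η, diagonal_mul_diagonal, ← diagonal_one]
  congr 1
  ext i
  fin_cases i <;> simp

lemma mul_η_mul_transpose {A : Matrix (Fin 3) (Fin 3) ℝ} (hA : Aᵀ * η * A = η) :
    A * η * Aᵀ = η := by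
  have hinv : (η * Aᵀ * η) * A = 1 := by
    rw [Matrix.mul_assoc _ η, Matrix.mul_assoc η, ← Matrix.mul_assoc Aᵀ, hA, η_mul_η]
  have := congrArg (· * η) (mul_eq_one_comm.mp hinv)
  simpa [Matrix.mul_assoc, η_mul_η] using this

lemma Matrix.mulVec_fin_three {α : Type*} [NonUnitalNonAssocSemiring α]
    (a₀₀ a₀₁ a₀₂ a₁₀ a₁₁ a₁₂ a₂₀ a₂₁ a₂₂ : α) (v : Fin 3 → α) :
    !![a₀₀, a₀₁, a₀₂; a₁₀, a₁₁, a₁₂; a₂₀, a₂₁, a₂₂] *ᵥ v =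
      ![a₀₀ * v 0 + a₀₁ * v 1 + a₀₂ * v 2, a₁₀ * v 0 + a₁₁ * v 1 + a₁₂ * v 2,
        a₂₀ * v 0 + a₂₁ * v 1 + a₂₂ * v 2] := by
  ext i
  fin_cases i <;> simp [mulVec, dotProduct, Fin.sum_univ_three]

lemma η_mulVec (v : Fin 3 → ℝ) : η *ᵥ v = ![v 0, v 1, -v 2] := by
  rw [η_eq, mulVec_fin_three]
  exact vec3_eq (by ring) (by ring) (by ring)

def minkowski (u v : Fin 3 → ℝ) : ℝ := u ⬝ᵥ η *ᵥ v

lemma minkowski_apply (u v : Fin 3 → ℝ) :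
    minkowski u v = u 0 * v 0 + u 1 * v 1 - u 2 * v 2 := by
  rw [minkowski, η_mulVec, vec3_dotProduct]
  simp only [cons_val_zero, cons_val_one, cons_val, Fin.isValue]
  ring

lemma minkowski_mulVec {A : Matrix (Fin 3) (Fin 3) ℝ} (hA : Aᵀ * η * A = η) (u v : Fin 3 → ℝ) :
    minkowski (A *ᵥ u) (A *ᵥ v) = minkowski u v := by
  unfold minkowski
  conv_rhs => rw [← hA, ← mulVec_mulVec, ← mulVec_mulVec, dotProduct_mulVec, vecMul_transpose]

lemma minkowski_smul_left (r : ℝ) (u v : Fin 3 → ℝ) :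
    minkowski (r • u) v = r * minkowski u v := smul_dotProduct _ _ _

lemma minkowski_smul_right (r : ℝ) (u v : Fin 3 → ℝ) :
    minkowski u (r • v) = r * minkowski u v := by
  simp [minkowski, mulVec_smul]

def rotation₁₂ (c s : ℝ) : Matrix (Fin 3) (Fin 3) ℝ := !![c, -s, 0; s, c, 0; 0, 0, 1]

def boost₁₃ (l : ℝ) : Matrix (Fin 3) (Fin 3) ℝ :=
  !![(l + l⁻¹) / 2, 0, (l - l⁻¹) / 2; 0, 1, 0; (l - l⁻¹) / 2, 0, (l + l⁻¹) / 2]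

def boost₂₃ (l : ℝ) : Matrix (Fin 3) (Fin 3) ℝ :=
  !![1, 0, 0; 0, (l + l⁻¹) / 2, (l - l⁻¹) / 2; 0, (l - l⁻¹) / 2, (l + l⁻¹) / 2]

lemma rotation₁₂_mem {c s : ℝ} (h : c ^ 2 + s ^ 2 = 1) : SOplus21 (rotation₁₂ c s) := by
  refine ⟨?_, ?_, by simp [rotation₁₂]⟩
  · ext i j
    fin_cases i <;> fin_cases j <;>
      simp only [rotation₁₂, η_eq, mul_apply, transpose_apply, Fin.sum_univ_three, of_apply, cons_val',
        cons_val_zero, cons_val_one, cons_val, cons_val_fin_one, Fin.zero_eta, Fin.mk_one,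
        Fin.reduceFinMk, Fin.isValue] <;>
      first | ring1 | linear_combination h
  · simp only [rotation₁₂, det_fin_three, of_apply, cons_val', cons_val_zero, cons_val_one, cons_val,
      cons_val_fin_one, Fin.isValue]
    linear_combination h

lemma boost₁₃_mem {l : ℝ} (hl : 0 < l) : SOplus21 (boost₁₃ l) := by
  refine ⟨?_, ?_, show 0 < (l + l⁻¹) / 2 by positivity⟩
  · ext i j
    fin_cases i <;> fin_cases j <;>
      simp only [boost₁₃, η_eq, mul_apply, transpose_apply, Fin.sum_univ_three, of_apply, cons_val',
        cons_val_zero, cons_val_one, cons_val, cons_val_fin_one, Fin.zero_eta, Fin.mk_one,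
        Fin.reduceFinMk, Fin.isValue] <;>
      field_simp <;> ring
  · simp only [boost₁₃, det_fin_three, of_apply, cons_val', cons_val_zero, cons_val_one, cons_val,
      cons_val_fin_one, Fin.isValue]
    field_simp
    ring

lemma boost₂₃_mem {l : ℝ} (hl : 0 < l) : SOplus21 (boost₂₃ l) := by
  refine ⟨?_, ?_, show 0 < (l + l⁻¹) / 2 by positivity⟩
  · ext i j
    fin_cases i <;> fin_cases j <;>
      simp only [boost₂₃, η_eq, mul_apply, transpose_apply, Fin.sum_univ_three, of_apply, cons_val',
        cons_val_zero, cons_val_one, cons_val, cons_val_fin_one, Fin.zero_eta, Fin.mk_one,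
        Fin.reduceFinMk, Fin.isValue] <;>
      field_simp <;> ring
  · simp only [boost₂₃, det_fin_three, of_apply, cons_val', cons_val_zero, cons_val_one, cons_val,
      cons_val_fin_one, Fin.isValue]
    field_simp
    ring

lemma rotation₁₂_mulVec (c s : ℝ) (v : Fin 3 → ℝ) :
    rotation₁₂ c s *ᵥ v = ![c * v 0 - s * v 1, s * v 0 + c * v 1, v 2] := by
  rw [rotation₁₂, mulVec_fin_three]
  exact vec3_eq (by ring) (by ring) (by ring)

-- In the light-cone coordinates `a ± c` the boost is diagonal, with eigenvalues `l` and `l⁻¹`.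
lemma boost₁₃_mulVec {l a b c a' c' : ℝ} (hl : l ≠ 0) (hsum : a' + c' = l * (a + c))
    (hdiff : l * (a' - c') = a - c) : boost₁₃ l *ᵥ ![a, b, c] = ![a', b, c'] := by
  rw [boost₁₃, mulVec_fin_three]
  refine vec3_eq ?_ ?_ ?_ <;> simp only [cons_val_zero, cons_val_one, cons_val, Fin.isValue]
  · field_simp
    linear_combination -(l * hsum + hdiff)
  · ring
  · field_simp
    linear_combination -(l * hsum - hdiff)

lemma boost₂₃_mulVec {l a b c b' c' : ℝ} (hl : l ≠ 0) (hsum : b' + c' = l * (b + c))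
    (hdiff : l * (b' - c') = b - c) : boost₂₃ l *ᵥ ![a, b, c] = ![a, b', c'] := by
  rw [boost₂₃, mulVec_fin_three]
  refine vec3_eq ?_ ?_ ?_ <;> simp only [cons_val_zero, cons_val_one, cons_val, Fin.isValue]
  · ring
  · field_simp
    linear_combination -(l * hsum + hdiff)
  · field_simp
    linear_combination -(l * hsum - hdiff)

lemma sq_add_sq_sub_sq_col_two {A : Matrix (Fin 3) (Fin 3) ℝ} (hA : Aᵀ * η * A = η) :
    A 0 2 ^ 2 + A 1 2 ^ 2 - A 2 2 ^ 2 = -1 := by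
  have h22 := congr_fun₂ hA 2 2
  simp only [η_eq, mul_apply, transpose_apply, Fin.sum_univ_three, of_apply, cons_val', cons_val_zero,
    cons_val_one, cons_val, cons_val_fin_one, Fin.isValue] at h22
  linear_combination h22

namespace SOplus21

lemma one : SOplus21 1 := ⟨by simp, det_one, by simp⟩

lemma mul {A B : Matrix (Fin 3) (Fin 3) ℝ} (hA : SOplus21 A) (hB : SOplus21 B) :
    SOplus21 (A * B) := by
  obtain ⟨hAη, hAdet, hA22⟩ := hA
  obtain ⟨hBη, hBdet, hB22⟩ := hB
  refine ⟨?_, by rw [det_mul, hAdet, hBdet, one_mul], ?_⟩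
  · rw [transpose_mul, show Bᵀ * Aᵀ * η * (A * B) = Bᵀ * (Aᵀ * η * A) * B by
      simp only [Matrix.mul_assoc], hAη, hBη]
  · have hrow := sq_add_sq_sub_sq_col_two (A := Aᵀ) (by rw [transpose_transpose]; exact mul_η_mul_transpose hAη)
    have hcol := sq_add_sq_sub_sq_col_two hBη
    simp only [transpose_apply] at hrow
    rw [mul_apply, Fin.sum_univ_three]
    -- reverse Cauchy–Schwarz for the future timelike vectors (row 2 of `A`, column 2 of `B`)
    nlinarith [sq_nonneg (A 2 0 * B 1 2 - A 2 1 * B 0 2), mul_pos hA22 hB22,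
      sq_nonneg (A 2 0 * B 0 2 + A 2 1 * B 1 2 + A 2 2 * B 2 2)]

end SOplus21

def ofReIm (x y : Fin 3 → ℝ) : Fin 3 → ℂ := fun j => x j + y j * Complex.I

lemma ofReIm_re_im (z : Fin 3 → ℂ) : ofReIm (fun j => (z j).re) (fun j => (z j).im) = z := by
  ext j
  simp [ofReIm, Complex.re_add_im]

lemma actC_ofReIm (A : Matrix (Fin 3) (Fin 3) ℝ) (x y : Fin 3 → ℝ) :
    actC A (ofReIm x y) = ofReIm (A *ᵥ x) (A *ᵥ y) := by
  ext i
  simp only [actC, ofReIm, mulVec, dotProduct, Fin.sum_univ_three, map_apply]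
  push_cast
  ring

lemma ofReal_smul_ofReIm (r : ℝ) (x y : Fin 3 → ℝ) :
    (r : ℂ) • ofReIm x y = ofReIm (r • x) (r • y) := by
  ext j
  simp only [ofReIm, Pi.smul_apply, smul_eq_mul, Complex.ofReal_mul]
  ring

lemma ofReIm_smul_right (x : Fin 3 → ℝ) (α : ℝ) :
    ofReIm x (α • x) = (1 + α * Complex.I) • ofReIm x 0 := by
  ext j
  simp only [ofReIm, Pi.smul_apply, smul_eq_mul, Pi.zero_apply, Complex.ofReal_mul,
    Complex.ofReal_zero]
  ring

lemma ofReIm_zero_left (y : Fin 3 → ℝ) : ofReIm 0 y = Complex.I • ofReIm y 0 := by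
  ext j
  simp [ofReIm, mul_comm]

lemma actC_one (z : Fin 3 → ℂ) : actC 1 z = z := by
  simp [actC]

lemma actC_mul (A B : Matrix (Fin 3) (Fin 3) ℝ) (z : Fin 3 → ℂ) :
    actC (A * B) z = actC A (actC B z) := by
  rw [actC, actC, actC, show (fun a : ℝ => (a : ℂ)) = ⇑Complex.ofRealHom from rfl, Matrix.map_mul,
    mulVec_mulVec]

lemma actC_smul (A : Matrix (Fin 3) (Fin 3) ℝ) (c : ℂ) (z : Fin 3 → ℂ) :
    actC A (c • z) = c • actC A z :=
  mulVec_smul _ _ _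

lemma actC_neg (A : Matrix (Fin 3) (Fin 3) ℝ) (z : Fin 3 → ℂ) : actC (-A) z = -actC A z := by
  simp [actC, Matrix.map_neg, neg_mulVec]

def HasCanonForm (z : Fin 3 → ℂ) : Prop :=
  ∃ c : ℂ, c ≠ 0 ∧ ∃ A : Matrix (Fin 3) (Fin 3) ℝ, SOplus21 A ∧ c • actC A z ∈ canonSet

namespace HasCanonForm

lemma of_mem {z : Fin 3 → ℂ} (h : z ∈ canonSet) : HasCanonForm z :=
  ⟨1, one_ne_zero, 1, SOplus21.one, by rwa [actC_one, one_smul]⟩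

lemma of_smul {z : Fin 3 → ℂ} {c : ℂ} (hc : c ≠ 0) (h : HasCanonForm (c • z)) :
    HasCanonForm z := by
  obtain ⟨c', hc', A, hA, hmem⟩ := h
  exact ⟨c' * c, mul_ne_zero hc' hc, A, hA, by rwa [actC_smul, smul_smul] at hmem⟩

lemma smul {z : Fin 3 → ℂ} {c : ℂ} (hc : c ≠ 0) (h : HasCanonForm z) :
    HasCanonForm (c • z) :=
  of_smul (inv_ne_zero hc) (by rwa [smul_smul, inv_mul_cancel₀ hc, one_smul])

lemma of_actC {z : Fin 3 → ℂ} {A : Matrix (Fin 3) (Fin 3) ℝ} (hA : SOplus21 A)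
    (h : HasCanonForm (actC A z)) : HasCanonForm z := by
  obtain ⟨c, hc, B, hB, hmem⟩ := h
  exact ⟨c, hc, B * A, hB.mul hA, by rwa [actC_mul]⟩

-- `η` is not in `SO⁺(2,1)`, but `-η` is the rotation by `π` in the `(1,2)`-plane.
lemma of_actC_η {z : Fin 3 → ℂ} (h : HasCanonForm (actC η z)) : HasCanonForm z := by
  have hη : η = -rotation₁₂ (-1) 0 := by
    ext i j
    fin_cases i <;> fin_cases j <;> simp [η_eq, rotation₁₂]
  rw [hη, actC_neg, ← neg_one_smul ℂ] at h
  exact of_actC (rotation₁₂_mem (by norm_num)) (of_smul (by norm_num) h)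

lemma of_mulVec_eq_smul {x y e : Fin 3 → ℝ} {A : Matrix (Fin 3) (Fin 3) ℝ} {s : ℝ}
    (hA : SOplus21 A) (hs : s ≠ 0) (hx : A *ᵥ x = s • e)
    (h : HasCanonForm (ofReIm e (s⁻¹ • A *ᵥ y))) : HasCanonForm (ofReIm x y) := by
  refine of_actC hA (of_smul (c := ((s⁻¹ : ℝ) : ℂ)) (by simpa using hs) ?_)
  rwa [actC_ofReIm, ofReal_smul_ofReIm, hx, smul_smul, inv_mul_cancel₀ hs, one_smul]

end HasCanonForm

lemma exists_pos_sq_mul_eq {u v : ℝ} (h : 0 < u * v) : ∃ l > 0, l ^ 2 * u = v := by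
  have hu : u ≠ 0 := by rintro rfl; simp at h
  have hvu : 0 < v / u := by
    rw [show v / u = u * v / u ^ 2 by field_simp]
    positivity
  exact ⟨√(v / u), Real.sqrt_pos.2 hvu, by rw [Real.sq_sqrt hvu.le, div_mul_cancel₀ _ hu]⟩

lemma exists_rotation₁₂_mulVec_eq (x : Fin 3 → ℝ) {a : ℝ} (ha : a ^ 2 = x 0 ^ 2 + x 1 ^ 2) :
    ∃ A, SOplus21 A ∧ A *ᵥ x = ![a, 0, x 2] := by
  rcases eq_or_ne a 0 with rfl | ha0
  · have h0 : x 0 = 0 := by nlinarith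
    have h1 : x 1 = 0 := by nlinarith
    refine ⟨1, SOplus21.one, ?_⟩
    ext i
    fin_cases i <;> simp [h0, h1]
  · refine ⟨rotation₁₂ (x 0 / a) (-x 1 / a), rotation₁₂_mem ?_, ?_⟩
    · field_simp
      linear_combination ha.symm
    · rw [rotation₁₂_mulVec]
      refine vec3_eq ?_ ?_ rfl
      · field_simp
        linear_combination ha.symm
      · ring

lemma exists_mulVec_eq_smul_of_spacelike {x : Fin 3 → ℝ} (hx : 0 < minkowski x x) :
    ∃ A, SOplus21 A ∧ ∃ s : ℝ, s ≠ 0 ∧ A *ᵥ x = s • ![1, 0, 0] := by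
  set ρ := √(x 0 ^ 2 + x 1 ^ 2)
  obtain ⟨R, hR, hRx⟩ := exists_rotation₁₂_mulVec_eq x (a := ρ) (Real.sq_sqrt (by positivity))
  have hq : (ρ + x 2) * (ρ - x 2) = minkowski x x := by
    rw [minkowski_apply]
    linear_combination (Real.sq_sqrt (by positivity : 0 ≤ x 0 ^ 2 + x 1 ^ 2))
  obtain ⟨l, hl, hl2⟩ := exists_pos_sq_mul_eq (hq ▸ hx)
  refine ⟨boost₁₃ l * R, (boost₁₃_mem hl).mul hR, l * (ρ + x 2), ?_, ?_⟩
  · exact mul_ne_zero hl.ne' (left_ne_zero_of_mul (hq ▸ hx).ne')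
  · rw [← mulVec_mulVec, hRx, boost₁₃_mulVec (a' := l * (ρ + x 2)) (c' := 0) hl.ne' (by ring)
      (by linear_combination hl2)]
    ext i
    fin_cases i <;> simp

lemma exists_mulVec_eq_smul_of_timelike {x : Fin 3 → ℝ} (hx : minkowski x x < 0) :
    ∃ A, SOplus21 A ∧ ∃ s : ℝ, s ≠ 0 ∧ A *ᵥ x = s • ![0, 0, 1] := by
  set ρ := √(x 0 ^ 2 + x 1 ^ 2)
  obtain ⟨R, hR, hRx⟩ := exists_rotation₁₂_mulVec_eq x (a := ρ) (Real.sq_sqrt (by positivity))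
  have hq : (ρ + x 2) * (x 2 - ρ) = -minkowski x x := by
    rw [minkowski_apply]
    linear_combination -(Real.sq_sqrt (by positivity : 0 ≤ x 0 ^ 2 + x 1 ^ 2))
  have huv : 0 < (ρ + x 2) * (x 2 - ρ) := by linarith
  obtain ⟨l, hl, hl2⟩ := exists_pos_sq_mul_eq huv
  refine ⟨boost₁₃ l * R, (boost₁₃_mem hl).mul hR, l * (ρ + x 2), ?_, ?_⟩
  · exact mul_ne_zero hl.ne' (left_ne_zero_of_mul huv.ne')
  · rw [← mulVec_mulVec, hRx, boost₁₃_mulVec (a' := 0) (c' := l * (ρ + x 2)) hl.ne' (by ring)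
      (by linear_combination -hl2)]
    ext i
    fin_cases i <;> simp

lemma exists_mulVec_eq_smul_of_null {x : Fin 3 → ℝ} (hx : minkowski x x = 0) (hx0 : x ≠ 0) :
    ∃ A, SOplus21 A ∧ ∃ s : ℝ, s ≠ 0 ∧ A *ᵥ x = s • ![1, 0, 1] := by
  rw [minkowski_apply] at hx
  obtain ⟨R, hR, hRx⟩ := exists_rotation₁₂_mulVec_eq x (a := x 2) (by linear_combination -hx)
  refine ⟨R, hR, x 2, fun h2 ↦ hx0 ?_, ?_⟩
  · have h0 : x 0 = 0 := by nlinarith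
    have h1 : x 1 = 0 := by nlinarith
    ext i
    fin_cases i <;> simp [h0, h1, h2]
  · rw [hRx]
    ext i
    fin_cases i <;> simp

lemma minkowski_self_nonneg_of_timelike_of_orthogonal {x y : Fin 3 → ℝ}
    (hx : minkowski x x < 0) (hxy : minkowski x y = 0) : 0 ≤ minkowski y y := by
  rw [minkowski_apply] at *
  have hx2 : 0 < x 2 ^ 2 := by nlinarith [sq_nonneg (x 0), sq_nonneg (x 1)]
  -- Lagrange's identity, using `x 0 * y 0 + x 1 * y 1 = x 2 * y 2`
  have key : x 2 ^ 2 * (y 0 * y 0 + y 1 * y 1 - y 2 * y 2) =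
      (x 0 * y 1 - x 1 * y 0) ^ 2 + (x 2 ^ 2 - x 0 ^ 2 - x 1 ^ 2) * (y 0 ^ 2 + y 1 ^ 2) := by
    linear_combination (x 0 * y 0 + x 1 * y 1 + x 2 * y 2) * hxy
  refine nonneg_of_mul_nonneg_right (a := x 2 ^ 2) ?_ hx2
  rw [key]
  have : 0 ≤ x 2 ^ 2 - x 0 ^ 2 - x 1 ^ 2 := by linarith
  positivity

lemma exists_eq_smul_of_null_of_orthogonal {x y : Fin 3 → ℝ} (hx : minkowski x x = 0)
    (hx0 : x ≠ 0) (hxy : minkowski x y = 0) (hy : minkowski y y ≤ 0) : ∃ α : ℝ, y = α • x := by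
  rw [minkowski_apply] at *
  have hx2 : x 2 ≠ 0 := by
    intro h2
    have h0 : x 0 = 0 := by nlinarith
    have h1 : x 1 = 0 := by nlinarith
    exact hx0 (by ext i; fin_cases i <;> simp [h0, h1, h2])
  set α := y 2 / x 2
  have hα : α * x 2 = y 2 := div_mul_cancel₀ _ hx2
  have key : (y 0 - α * x 0) ^ 2 + (y 1 - α * x 1) ^ 2 = y 0 * y 0 + y 1 * y 1 - y 2 * y 2 := by
    linear_combination (-2 * α) * hxy + α ^ 2 * hx + (α * x 2 - y 2) * hα
  have h0 : y 0 = α * x 0 := by nlinarith [sq_nonneg (y 0 - α * x 0), sq_nonneg (y 1 - α * x 1)]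
  have h1 : y 1 = α * x 1 := by nlinarith [sq_nonneg (y 0 - α * x 0), sq_nonneg (y 1 - α * x 1)]
  exact ⟨α, by ext i; fin_cases i <;> simp [h0, h1, hα]⟩

lemma hasCanonForm_ofReIm_zero_right {x : Fin 3 → ℝ} (hx : minkowski x x ≤ 0) (hx0 : x ≠ 0) :
    HasCanonForm (ofReIm x 0) := by
  rcases hx.lt_or_eq with hneg | hnull
  · obtain ⟨A, hA, s, hs, hAx⟩ := exists_mulVec_eq_smul_of_timelike hneg
    refine .of_mulVec_eq_smul hA hs hAx (.of_mem ?_)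
    right; right; right; right; left
    ext i
    fin_cases i <;> simp [ofReIm, ε₃]
  · obtain ⟨A, hA, s, hs, hAx⟩ := exists_mulVec_eq_smul_of_null hnull hx0
    refine .of_mulVec_eq_smul hA hs hAx (.of_mem ?_)
    right; right; right; right; right
    ext i
    fin_cases i <;> simp [ofReIm, ε₁, ε₃]

lemma hasCanonForm_ofReIm_of_null {x y : Fin 3 → ℝ} (hx : minkowski x x = 0) (hx0 : x ≠ 0)
    (hxy : minkowski x y = 0) (hy : minkowski y y ≤ 0) : HasCanonForm (ofReIm x y) := by
  obtain ⟨α, rfl⟩ := exists_eq_smul_of_null_of_orthogonal hx hx0 hxy hy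
  rw [ofReIm_smul_right]
  refine (hasCanonForm_ofReIm_zero_right hx.le hx0).smul fun h ↦ ?_
  simpa using congrArg Complex.re h

lemma hasCanonForm_ofReIm_zero_left {y : Fin 3 → ℝ} (hy : minkowski y y ≤ 0) (hy0 : y ≠ 0) :
    HasCanonForm (ofReIm 0 y) := by
  rw [ofReIm_zero_left]
  exact (hasCanonForm_ofReIm_zero_right hy hy0).smul Complex.I_ne_zero

lemma hasCanonForm_e₁_null {σ : ℝ} (hσ : σ = 1 ∨ σ = -1) :
    HasCanonForm (ofReIm ![1, 0, 0] ![0, σ, -1]) := by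
  have hσ2 : σ ^ 2 = 1 := by rcases hσ with rfl | rfl <;> norm_num
  refine ⟨Complex.I, Complex.I_ne_zero, rotation₁₂ 0 σ, rotation₁₂_mem (by simpa using hσ2), ?_⟩
  rw [actC_ofReIm, rotation₁₂_mulVec, rotation₁₂_mulVec]
  rcases hσ with rfl | rfl
  · right; right; left
    ext i
    fin_cases i <;> simp [ofReIm, ε₁, ε₂, ε₃]
  · right; right; right; left
    ext i
    fin_cases i <;> simp [ofReIm, ε₁, ε₂, ε₃]

lemma hasCanonForm_e₁_timelike {u : ℝ} (hu : u < 0) :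
    HasCanonForm (ofReIm ![1, 0, 0] ![0, 0, u]) := by
  obtain ⟨l, hl, hl2⟩ := exists_pos_sq_mul_eq (u := -2 * u) (v := 1 + u ^ 2) (by nlinarith)
  obtain ⟨t, ht⟩ : ∃ t : ℝ, t = l ^ 2 + u := ⟨_, rfl⟩
  have hu0 : u ≠ 0 := hu.ne
  -- `l` and `c` match the light-cone coordinates `z 0 ± z 2` of `c • boost₁₃ l z` with those of
  -- the target, namely `(2 + 2 t i, 2 i)`.
  refine ⟨((u * l)⁻¹ : ℝ) * (u - Complex.I), ?_, boost₁₃ l, boost₁₃_mem hl, ?_⟩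
  · refine mul_ne_zero (by simpa using ⟨hl.ne', hu0⟩) fun h ↦ ?_
    simpa using congrArg Complex.im h
  · right; left
    refine ⟨t, ?_⟩
    ext i
    fin_cases i <;> simp [actC, boost₁₃, mulVec, dotProduct, Fin.sum_univ_three, ofReIm, ε₁, ε₃,
      Complex.ext_iff] <;> field_simp <;> subst ht
    · exact ⟨by ring, by linear_combination (l ^ 2 + 1) * hl2⟩
    · exact ⟨by ring, by linear_combination (l ^ 2 - 1) * hl2⟩

lemma ofReIm_e₁_mem_canonSet {t : ℝ} (ht : t ^ 2 ≤ 1) : ofReIm ![1, 0, 0] ![0, t, 0] ∈ canonSet := by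
  left
  refine ⟨t, ⟨by nlinarith, by nlinarith⟩, ?_⟩
  ext i
  fin_cases i <;> simp [ofReIm, ε₁, ε₂, mul_comm]

lemma HasCanonForm.of_boost₂₃ {l p w p' w' : ℝ} (hl : 0 < l) (hsum : p' + w' = l * (p + w))
    (hdiff : l * (p' - w') = p - w) (h : HasCanonForm (ofReIm ![1, 0, 0] ![0, p', w'])) :
    HasCanonForm (ofReIm ![1, 0, 0] ![0, p, w]) := by
  refine .of_actC (boost₂₃_mem hl) ?_
  rwa [actC_ofReIm, boost₂₃_mulVec (b' := 0) (c' := 0) hl.ne' (by ring) (by ring),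
    boost₂₃_mulVec hl.ne' hsum hdiff]

lemma hasCanonForm_e₁_of_nonpos {p w : ℝ} (hw : w ≤ 0) (h : p ^ 2 - w ^ 2 ≤ 1) :
    HasCanonForm (ofReIm ![1, 0, 0] ![0, p, w]) := by
  rcases lt_trichotomy (p ^ 2 - w ^ 2) 0 with htime | hnull | hspace
  · have huv : 0 < (p + w) * (w - p) := by linarith
    have hpw : p + w < 0 := by nlinarith
    obtain ⟨l, hl, hl2⟩ := exists_pos_sq_mul_eq huv
    exact .of_boost₂₃ (p' := 0) hl (by ring) (by linear_combination -hl2)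
      (hasCanonForm_e₁_timelike (mul_neg_of_pos_of_neg hl hpw))
  · rcases lt_trichotomy p 0 with hp | rfl | hp
    · have hwp : w = p := by nlinarith
      rw [hwp]
      exact .of_boost₂₃ (inv_pos.2 (neg_pos.2 hp)) (by field_simp [hp.ne]; ring) (by ring)
        (hasCanonForm_e₁_null (Or.inr rfl))
    · have hw0 : w = 0 := by nlinarith
      rw [hw0]
      exact .of_mem (ofReIm_e₁_mem_canonSet (by norm_num))
    · have hwp : w = -p := by nlinarith
      rw [hwp]
      exact .of_boost₂₃ hp (by ring) (by ring) (hasCanonForm_e₁_null (Or.inl rfl))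
  · have huv : 0 < (p + w) * (p - w) := by linarith
    obtain ⟨l, hl, hl2⟩ := exists_pos_sq_mul_eq huv
    have ht : (l * (p + w)) ^ 2 = p ^ 2 - w ^ 2 := by linear_combination (p + w) * hl2
    exact .of_boost₂₃ (w' := 0) hl (by ring) (by linear_combination hl2)
      (.of_mem (ofReIm_e₁_mem_canonSet (ht ▸ h)))

lemma hasCanonForm_e₁ {p w : ℝ} (h : p ^ 2 - w ^ 2 ≤ 1) :
    HasCanonForm (ofReIm ![1, 0, 0] ![0, p, w]) := by
  rcases le_total w 0 with hw | hw
  · exact hasCanonForm_e₁_of_nonpos hw h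
  · refine .of_actC_η ?_
    rw [actC_ofReIm, η_mulVec, η_mulVec]
    simpa using hasCanonForm_e₁_of_nonpos (p := p) (w := -w) (by linarith) (by simpa using h)

lemma hasCanonForm_ofReIm_of_spacelike {x y : Fin 3 → ℝ} (hx : 0 < minkowski x x)
    (hxy : minkowski x y = 0) (hyx : minkowski y y ≤ minkowski x x) :
    HasCanonForm (ofReIm x y) := by
  obtain ⟨A, hA, s, hs, hAx⟩ := exists_mulVec_eq_smul_of_spacelike hx
  refine .of_mulVec_eq_smul hA hs hAx ?_
  have hq (u v : Fin 3 → ℝ) :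
      minkowski (s⁻¹ • A *ᵥ u) (s⁻¹ • A *ᵥ v) = s⁻¹ ^ 2 * minkowski u v := by
    rw [minkowski_smul_left, minkowski_smul_right, minkowski_mulVec hA.1]
    ring
  have he₁ : s⁻¹ • A *ᵥ x = ![1, 0, 0] := by rw [hAx, smul_smul, inv_mul_cancel₀ hs, one_smul]
  have horth : minkowski ![1, 0, 0] (s⁻¹ • A *ᵥ y) = 0 := by rw [← he₁, hq, hxy, mul_zero]
  have hle : minkowski (s⁻¹ • A *ᵥ y) (s⁻¹ • A *ᵥ y) ≤ 1 :=
    calc _ = s⁻¹ ^ 2 * minkowski y y := hq y y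
      _ ≤ s⁻¹ ^ 2 * minkowski x x := by gcongr
      _ = minkowski ![1, 0, 0] ![1, 0, 0] := by rw [← hq, he₁]
      _ = 1 := by simp [minkowski_apply]
  generalize s⁻¹ • A *ᵥ y = v at horth hle
  have hv0 : v 0 = 0 := by simpa [minkowski_apply] using horth
  have hv : v = ![0, v 1, v 2] := by
    ext i
    fin_cases i <;> simp [hv0]
  rw [hv]
  exact hasCanonForm_e₁ (by simpa [minkowski_apply, hv0, sq] using hle)

lemma hasCanonForm_ofReIm {x y : Fin 3 → ℝ} (hxy : minkowski x y = 0)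
    (hyx : minkowski y y ≤ minkowski x x) (hne : ofReIm x y ≠ 0) : HasCanonForm (ofReIm x y) := by
  rcases lt_trichotomy (minkowski x x) 0 with hneg | hnull | hpos
  · have := minkowski_self_nonneg_of_timelike_of_orthogonal hneg hxy
    exact absurd hyx (by linarith)
  · rcases eq_or_ne x 0 with rfl | hx0
    · refine hasCanonForm_ofReIm_zero_left (hnull ▸ hyx) fun hy ↦ hne ?_
      ext j
      simp [ofReIm, hy]
    · exact hasCanonForm_ofReIm_of_null hnull hx0 hxy (hnull ▸ hyx)
  · exact hasCanonForm_ofReIm_of_spacelike hpos hxy hyx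

def qC (z : Fin 3 → ℂ) : ℂ := z 0 ^ 2 + z 1 ^ 2 - z 2 ^ 2

lemma qC_smul (c : ℂ) (z : Fin 3 → ℂ) : qC (c • z) = c ^ 2 * qC z := by
  simp only [qC, Pi.smul_apply, smul_eq_mul]
  ring

lemma qC_ofReIm (x y : Fin 3 → ℝ) :
    qC (ofReIm x y) = ⟨minkowski x x - minkowski y y, 2 * minkowski x y⟩ := by
  rw [Complex.mk_eq_add_mul_I]
  simp only [qC, ofReIm, minkowski_apply]
  push_cast
  linear_combination (y 0 ^ 2 + y 1 ^ 2 - y 2 ^ 2 : ℂ) * Complex.I_sq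

lemma exists_smul_qC_eq_ofReal_nonneg (z : Fin 3 → ℂ) :
    ∃ c : ℂ, c ≠ 0 ∧ ∃ r : ℝ, 0 ≤ r ∧ qC (c • z) = r := by
  rcases eq_or_ne (qC z) 0 with hq | hq
  · exact ⟨1, one_ne_zero, 0, le_rfl, by simp [hq]⟩
  · -- `c ^ 2 = conj (qC z)` gives `qC (c • z) = |qC z| ^ 2`
    obtain ⟨c, hc⟩ := IsAlgClosed.exists_pow_nat_eq ((starRingEnd ℂ) (qC z)) two_pos
    refine ⟨c, fun h ↦ hq ?_, Complex.normSq (qC z), Complex.normSq_nonneg _, ?_⟩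
    · simpa [h] using hc.symm
    · rw [qC_smul, hc, Complex.normSq_eq_conj_mul_self]

lemma hasCanonForm_of_qC_eq_ofReal_nonneg {z : Fin 3 → ℂ} (hz : z ≠ 0) {r : ℝ} (hr : 0 ≤ r)
    (hq : qC z = r) : HasCanonForm z := by
  rw [← ofReIm_re_im z] at hz hq ⊢
  rw [qC_ofReIm] at hq
  have hre : minkowski _ _ - minkowski _ _ = r := congrArg Complex.re hq
  have him : 2 * minkowski _ _ = 0 := congrArg Complex.im hq
  exact hasCanonForm_ofReIm (by linarith) (by linarith) hz

theorem orbits_SOplus21_existence (z : Fin 3 → ℂ) (hz : z ≠ 0) :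
    ∃ c : ℂ, c ≠ 0 ∧ ∃ A : Matrix (Fin 3) (Fin 3) ℝ, SOplus21 A ∧
      c • actC A z ∈ canonSet := by
  obtain ⟨c, hc, r, hr, hq⟩ := exists_smul_qC_eq_ofReal_nonneg z
  exact (hasCanonForm_of_qC_eq_ofReal_nonneg (smul_ne_zero hc hz) hr hq).of_smul hc
end
end

section
/- Let C = { ε₁ + i·t·ε₂ : t ∈ [−1,1] } ∪ { (ε₁+ε₃) + i·( t·(ε₁+ε₃) + (ε₁−ε₃) ) : t ∈ ℝ } ∪ { ε₁+ε₃+i·ε₂, ε₁+ε₃−i·ε₂ } ∪ { ε₃ } ∪ { ε₁+ε₃ } ⊆ ℂ³. If w, w' ∈ C and there exist a nonzero complex number c and A ∈ SO⁺(2,1) with c • (A w) = w', then w = w'. (Uniqueness part of the classification of the orbits of ℂ^× · SO⁺(2,1) on ℂ³ \ {0}, Proposition A.2 of the paper.) -/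
/-!
Write `k = |c|²` and `q(x) = x₁² + x₂² − x₃²`. Under `w ↦ c • A w` the Hermitian form
`H(w) = w̄ᵀ η w` is multiplied by `k`, and the η-normal `v(w)` of the real plane spanned by
`Re w` and `Im w` becomes `k • A v(w)`: the cofactor identity for the cross product together with
`det A = 1` and `Aᵀ η A = η` makes `A` commute with the η-cross product. Hence `q(v)` is multiplied
by `k²`, and if `v` is causal the sign of its time component is kept, because `A₃₃ > 0` makes `A`
preserve the future cone. On the canonical set these data separate all members, except that inside
the family `ε₁ + i t ε₂` they only give `s = k t` and `1 + s² = k (1 + t²)`, which together with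
`|s|, |t| ≤ 1` force `k = 1`.
-/

open Matrix

noncomputable section

theorem mulVec_cross_mulVec {R : Type*} [CommRing R] (A : Matrix (Fin 3) (Fin 3) R)
    (u v : Fin 3 → R) : (A *ᵥ u) ⨯₃ (A *ᵥ v) = A.adjugateᵀ *ᵥ (u ⨯₃ v) := by
  ext i
  fin_cases i <;>
    simp [cross_apply, adjugate_fin_three, mulVec, dotProduct, Fin.sum_univ_three] <;> ring

def lorentzQuad (v : Fin 3 → ℝ) : ℝ := v ⬝ᵥ η *ᵥ v

def lorentzCross (x y : Fin 3 → ℝ) : Fin 3 → ℝ := η *ᵥ (x ⨯₃ y)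

lemma lorentzQuad_apply (v : Fin 3 → ℝ) : lorentzQuad v = v 0 ^ 2 + v 1 ^ 2 - v 2 ^ 2 := by
  simp [lorentzQuad, η, mulVec_diagonal, dotProduct, Fin.sum_univ_three]; ring

lemma lorentzQuad_smul (k : ℝ) (v : Fin 3 → ℝ) : lorentzQuad (k • v) = k ^ 2 * lorentzQuad v := by
  simp only [lorentzQuad_apply, Pi.smul_apply, smul_eq_mul]; ring

lemma η_transpose : ηᵀ = η := diagonal_transpose _

namespace SOplus21

variable {A : Matrix (Fin 3) (Fin 3) ℝ}

lemma η_mul_transpose_mul_η_mul (hA : SOplus21 A) : η * Aᵀ * η * A = 1 := by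
  rw [show η * Aᵀ * η * A = η * (Aᵀ * η * A) by simp only [Matrix.mul_assoc], hA.1, η_mul_η]

lemma mul_η_mul_transpose_mul_η (hA : SOplus21 A) : A * (η * Aᵀ * η) = 1 :=
  mul_eq_one_comm.mp hA.η_mul_transpose_mul_η_mul

lemma mul_η_mul_transpose (hA : SOplus21 A) : A * η * Aᵀ = η := by
  have h := congrArg (· * η) hA.mul_η_mul_transpose_mul_η
  simpa [Matrix.mul_assoc, η_mul_η] using h

lemma adjugate_eq (hA : SOplus21 A) : A.adjugate = η * Aᵀ * η := by
  rw [← Matrix.mul_one A.adjugate, ← hA.mul_η_mul_transpose_mul_η, ← Matrix.mul_assoc,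
    adjugate_mul, hA.2.1, one_smul, Matrix.one_mul]

lemma lorentzQuad_mulVec (hA : SOplus21 A) (v : Fin 3 → ℝ) :
    lorentzQuad (A *ᵥ v) = lorentzQuad v := by
  rw [lorentzQuad, lorentzQuad, mulVec_mulVec, dotProduct_mulVec, ← vecMul_transpose,
    vecMul_vecMul, ← Matrix.mul_assoc, hA.1, dotProduct_comm, dotProduct_mulVec, dotProduct_comm]

lemma lorentzCross_mulVec (hA : SOplus21 A) (x y : Fin 3 → ℝ) :
    lorentzCross (A *ᵥ x) (A *ᵥ y) = A *ᵥ lorentzCross x y := by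
  rw [lorentzCross, lorentzCross, mulVec_cross_mulVec, hA.adjugate_eq, mulVec_mulVec,
    mulVec_mulVec]
  congr 1
  simp only [transpose_mul, transpose_transpose, η_transpose, ← Matrix.mul_assoc, η_mul_η,
    Matrix.one_mul]

lemma mulVec_two_pos (hA : SOplus21 A) {v : Fin 3 → ℝ} (hv : lorentzQuad v ≤ 0)
    (h2 : 0 < v 2) : 0 < (A *ᵥ v) 2 := by
  have hrow : A 2 0 ^ 2 + A 2 1 ^ 2 - A 2 2 ^ 2 = -1 := by
    have h := congrFun (congrFun hA.mul_η_mul_transpose 2) 2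
    simp [η, mul_apply, Fin.sum_univ_three] at h
    linear_combination h
  rw [lorentzQuad_apply] at hv
  simp only [mulVec, dotProduct, Fin.sum_univ_three]
  -- reverse Cauchy–Schwarz for the future timelike row `(A 2 0, A 2 1, A 2 2)`
  nlinarith [sq_nonneg (A 2 0 * v 1 - A 2 1 * v 0), mul_pos hA.2.2 h2,
    sq_nonneg (A 2 0 * v 0 + A 2 1 * v 1 + A 2 2 * v 2)]

lemma sign_mulVec_two (hA : SOplus21 A) {v : Fin 3 → ℝ} (hv : lorentzQuad v ≤ 0) :
    SignType.sign ((A *ᵥ v) 2) = SignType.sign (v 2) := by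
  rcases lt_trichotomy (v 2) 0 with h2 | h2 | h2
  · have := hA.mulVec_two_pos (v := -v) (by simpa [lorentzQuad_apply] using hv) (by simpa using h2)
    rw [sign_neg h2, sign_neg (by simpa [mulVec_neg] using this)]
  · have hv0 : v = 0 := by
      rw [lorentzQuad_apply, h2] at hv
      ext i; fin_cases i <;> simp <;> nlinarith [sq_nonneg (v 0), sq_nonneg (v 1)]
    simp [hv0]
  · rw [sign_pos h2, sign_pos (hA.mulVec_two_pos hv h2)]

end SOplus21

/-- `w̄ᵀ η w`, through the real and imaginary parts of `w`. -/
def hermForm (w : Fin 3 → ℂ) : ℝ := lorentzQuad (Complex.re ∘ w) + lorentzQuad (Complex.im ∘ w)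

/-- The η-normal of the real plane spanned by `Re w` and `Im w`. -/
def imCross (w : Fin 3 → ℂ) : Fin 3 → ℝ := lorentzCross (Complex.re ∘ w) (Complex.im ∘ w)

lemma re_comp_actC (A : Matrix (Fin 3) (Fin 3) ℝ) (w : Fin 3 → ℂ) :
    Complex.re ∘ actC A w = A *ᵥ (Complex.re ∘ w) := by
  ext i
  simp [actC, mulVec, dotProduct, Fin.sum_univ_three]

lemma im_comp_actC (A : Matrix (Fin 3) (Fin 3) ℝ) (w : Fin 3 → ℂ) :
    Complex.im ∘ actC A w = A *ᵥ (Complex.im ∘ w) := by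
  ext i
  simp [actC, mulVec, dotProduct, Fin.sum_univ_three]

lemma hermForm_smul (c : ℂ) (w : Fin 3 → ℂ) : hermForm (c • w) = Complex.normSq c * hermForm w := by
  simp only [hermForm, lorentzQuad_apply, Function.comp_apply, Pi.smul_apply, smul_eq_mul,
    Complex.mul_re, Complex.mul_im, Complex.normSq_apply]
  ring

lemma imCross_smul (c : ℂ) (w : Fin 3 → ℂ) : imCross (c • w) = Complex.normSq c • imCross w := by
  have h : (Complex.re ∘ (c • w)) ⨯₃ (Complex.im ∘ (c • w)) =
      Complex.normSq c • ((Complex.re ∘ w) ⨯₃ (Complex.im ∘ w)) := by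
    ext i
    fin_cases i <;>
      simp [cross_apply, Complex.mul_re, Complex.mul_im, Complex.normSq_apply] <;> ring
  rw [imCross, lorentzCross, h, mulVec_smul, imCross, lorentzCross]

lemma SOplus21.hermForm_actC {A : Matrix (Fin 3) (Fin 3) ℝ} (hA : SOplus21 A) (w : Fin 3 → ℂ) :
    hermForm (actC A w) = hermForm w := by
  rw [hermForm, re_comp_actC, im_comp_actC, hA.lorentzQuad_mulVec, hA.lorentzQuad_mulVec, hermForm]

lemma SOplus21.imCross_actC {A : Matrix (Fin 3) (Fin 3) ℝ} (hA : SOplus21 A) (w : Fin 3 → ℂ) :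
    imCross (actC A w) = A *ᵥ imCross w := by
  rw [imCross, re_comp_actC, im_comp_actC, hA.lorentzCross_mulVec, imCross]

/-- How the invariants of `w' = c • A w` are related to those of `w`, with `k = |c|²`. -/
structure ScaledInvariants (w w' : Fin 3 → ℂ) (k : ℝ) : Prop where
  pos : 0 < k
  hermForm_eq : hermForm w' = k * hermForm w
  lorentzQuad_eq : lorentzQuad (imCross w') = k ^ 2 * lorentzQuad (imCross w)
  sign_eq : lorentzQuad (imCross w) ≤ 0 →
    SignType.sign (imCross w' 2) = SignType.sign (imCross w 2)

lemma scaledInvariants_smul_actC {c : ℂ} (hc : c ≠ 0) {A : Matrix (Fin 3) (Fin 3) ℝ}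
    (hA : SOplus21 A) (w : Fin 3 → ℂ) :
    ScaledInvariants w (c • actC A w) (Complex.normSq c) where
  pos := Complex.normSq_pos.mpr hc
  hermForm_eq := by rw [hermForm_smul, hA.hermForm_actC]
  lorentzQuad_eq := by rw [imCross_smul, hA.imCross_actC, lorentzQuad_smul, hA.lorentzQuad_mulVec]
  sign_eq hv := by
    rw [imCross_smul, hA.imCross_actC, Pi.smul_apply, smul_eq_mul, sign_mul,
      sign_pos (Complex.normSq_pos.mpr hc), one_mul, hA.sign_mulVec_two hv]

def family₁ (t : ℝ) : Fin 3 → ℂ := ε₁ + (Complex.I * (t : ℂ)) • ε₂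

def family₂ (t : ℝ) : Fin 3 → ℂ := (ε₁ + ε₃) + Complex.I • ((t : ℂ) • (ε₁ + ε₃) + (ε₁ - ε₃))

lemma mem_canonSet_iff {w : Fin 3 → ℂ} : w ∈ canonSet ↔
    (∃ t ∈ Set.Icc (-1 : ℝ) 1, w = family₁ t) ∨ (∃ t : ℝ, w = family₂ t) ∨
      w = ε₁ + ε₃ + Complex.I • ε₂ ∨ w = ε₁ + ε₃ - Complex.I • ε₂ ∨ w = ε₃ ∨ w = ε₁ + ε₃ :=
  Iff.rfl

@[simp] lemma hermForm_family₁ (t : ℝ) : hermForm (family₁ t) = 1 + t ^ 2 := by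
  simp [family₁, hermForm, lorentzQuad_apply, ε₁, ε₂]

@[simp] lemma imCross_family₁ (t : ℝ) : imCross (family₁ t) = ![0, 0, -t] := by
  ext i
  fin_cases i <;> simp [family₁, imCross, lorentzCross, η, mulVec_diagonal, cross_apply, ε₁, ε₂]

@[simp] lemma hermForm_family₂ (t : ℝ) : hermForm (family₂ t) = 4 * t := by
  simp [family₂, hermForm, lorentzQuad_apply, ε₁, ε₃]; ring

@[simp] lemma imCross_family₂ (t : ℝ) : imCross (family₂ t) = ![0, 2, 0] := by
  ext i
  fin_cases i <;> simp [family₂, imCross, lorentzCross, η, mulVec_diagonal, cross_apply, ε₁, ε₃]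
  ring

@[simp] lemma hermForm_add_I_smul : hermForm (ε₁ + ε₃ + Complex.I • ε₂) = 1 := by
  simp [hermForm, lorentzQuad_apply, ε₁, ε₂, ε₃]

@[simp] lemma imCross_add_I_smul : imCross (ε₁ + ε₃ + Complex.I • ε₂) = ![-1, 0, -1] := by
  ext i; fin_cases i <;> simp [imCross, lorentzCross, η, mulVec_diagonal, cross_apply, ε₁, ε₂, ε₃]

@[simp] lemma hermForm_sub_I_smul : hermForm (ε₁ + ε₃ - Complex.I • ε₂) = 1 := by
  simp [hermForm, lorentzQuad_apply, ε₁, ε₂, ε₃]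

@[simp] lemma imCross_sub_I_smul : imCross (ε₁ + ε₃ - Complex.I • ε₂) = ![1, 0, 1] := by
  ext i; fin_cases i <;> simp [imCross, lorentzCross, η, mulVec_diagonal, cross_apply, ε₁, ε₂, ε₃]

@[simp] lemma hermForm_ε₃ : hermForm ε₃ = -1 := by
  simp [hermForm, lorentzQuad_apply, ε₃]

@[simp] lemma imCross_ε₃ : imCross ε₃ = 0 := by
  ext i; fin_cases i <;> simp [imCross, lorentzCross, η, mulVec_diagonal, cross_apply, ε₃]

@[simp] lemma hermForm_ε₁_add_ε₃ : hermForm (ε₁ + ε₃) = 0 := by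
  simp [hermForm, lorentzQuad_apply, ε₁, ε₃]

@[simp] lemma imCross_ε₁_add_ε₃ : imCross (ε₁ + ε₃) = 0 := by
  ext i; fin_cases i <;> simp [imCross, lorentzCross, η, mulVec_diagonal, cross_apply, ε₁, ε₃]

/-- The bounds are needed: `s = t⁻¹`, `k = t⁻²` satisfy the other hypotheses. -/
theorem eq_of_family₁_invariants {k s t : ℝ} (hk : 0 < k) (hs : s ∈ Set.Icc (-1 : ℝ) 1)
    (ht : t ∈ Set.Icc (-1 : ℝ) 1) (hH : 1 + s ^ 2 = k * (1 + t ^ 2)) (hq : s ^ 2 = k ^ 2 * t ^ 2)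
    (hsign : SignType.sign s = SignType.sign t) : s = t := by
  have hst : s = k * t := by
    have hprod : (s - k * t) * (s + k * t) = 0 := by linear_combination hq
    rcases lt_trichotomy t 0 with h | rfl | h
    · rw [sign_neg h, sign_eq_neg_one_iff] at hsign
      exact sub_eq_zero.mp ((mul_eq_zero.mp hprod).resolve_right (by nlinarith))
    · simpa using hq
    · rw [sign_pos h, sign_eq_one_iff] at hsign
      exact sub_eq_zero.mp ((mul_eq_zero.mp hprod).resolve_right (by nlinarith))
  have hk1 : k = 1 := by
    have : (k - 1) * (k * t ^ 2 - 1) = 0 := by linear_combination hH - hq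
    rcases mul_eq_zero.mp this with h | h
    · linarith
    · have ht2 : t ^ 2 ≤ 1 := by nlinarith [ht.1, ht.2]
      have hs2 : s ^ 2 ≤ 1 := by nlinarith [hs.1, hs.2]
      apply le_antisymm
      · nlinarith
      · nlinarith [mul_nonneg hk.le (sub_nonneg.2 ht2)]
  rw [hst, hk1, one_mul]

namespace ScaledInvariants

variable {w' : Fin 3 → ℂ} {k : ℝ}

theorem eq_family₁ {t : ℝ} (ht : t ∈ Set.Icc (-1 : ℝ) 1) (h : ScaledInvariants (family₁ t) w' k)
    (hw' : w' ∈ canonSet) : w' = family₁ t := by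
  obtain ⟨hk, hH, hq, hsign⟩ := h
  rcases mem_canonSet_iff.mp hw' with ⟨s, hs, rfl⟩ | ⟨s, rfl⟩ | rfl | rfl | rfl | rfl <;>
    simp [lorentzQuad_apply, hk.ne', sq_nonneg, Left.sign_neg] at hH hq hsign ⊢
  · rw [eq_of_family₁_invariants hk hs ht hH hq hsign]
  -- against `ε₁ + ε₃ ± i ε₂`: `q(v)` forces `t = 0`, and then the time signs of `v` differ
  all_goals first | nlinarith [sq_nonneg (k * t)] | (subst_vars; simp at hsign)

theorem eq_family₂ {t : ℝ} (h : ScaledInvariants (family₂ t) w' k) (hw' : w' ∈ canonSet) :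
    w' = family₂ t := by
  obtain ⟨hk, hH, hq, -⟩ := h
  rcases mem_canonSet_iff.mp hw' with ⟨s, -, rfl⟩ | ⟨s, rfl⟩ | rfl | rfl | rfl | rfl <;>
    simp [lorentzQuad_apply, hk.ne'] at hH hq ⊢
  · nlinarith [sq_nonneg s]
  · obtain rfl : k = 1 := hq.resolve_right (by linarith)
    rw [show s = t by linarith]

theorem eq_add_I_smul (h : ScaledInvariants (ε₁ + ε₃ + Complex.I • ε₂) w' k)
    (hw' : w' ∈ canonSet) : w' = ε₁ + ε₃ + Complex.I • ε₂ := by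
  obtain ⟨-, -, hq, hsign⟩ := h
  rcases mem_canonSet_iff.mp hw' with ⟨s, -, rfl⟩ | ⟨s, rfl⟩ | rfl | rfl | rfl | rfl <;>
    simp [lorentzQuad_apply, Left.sign_neg] at hq hsign ⊢
  subst hq
  simp at hsign

theorem eq_sub_I_smul (h : ScaledInvariants (ε₁ + ε₃ - Complex.I • ε₂) w' k)
    (hw' : w' ∈ canonSet) : w' = ε₁ + ε₃ - Complex.I • ε₂ := by
  obtain ⟨-, -, hq, hsign⟩ := h
  rcases mem_canonSet_iff.mp hw' with ⟨s, -, rfl⟩ | ⟨s, rfl⟩ | rfl | rfl | rfl | rfl <;>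
    simp [lorentzQuad_apply, Left.sign_neg] at hq hsign ⊢
  subst hq
  simp at hsign

theorem eq_ε₃ (h : ScaledInvariants ε₃ w' k) (hw' : w' ∈ canonSet) : w' = ε₃ := by
  obtain ⟨hk, hH, hq, -⟩ := h
  rcases mem_canonSet_iff.mp hw' with ⟨s, -, rfl⟩ | ⟨s, rfl⟩ | rfl | rfl | rfl | rfl <;>
    simp [lorentzQuad_apply] at hH hq ⊢
  all_goals subst_vars; linarith

theorem eq_ε₁_add_ε₃ (h : ScaledInvariants (ε₁ + ε₃) w' k) (hw' : w' ∈ canonSet) :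
    w' = ε₁ + ε₃ := by
  obtain ⟨hk, hH, hq, -⟩ := h
  rcases mem_canonSet_iff.mp hw' with ⟨s, -, rfl⟩ | ⟨s, rfl⟩ | rfl | rfl | rfl | rfl <;>
    simp [lorentzQuad_apply] at hH hq ⊢
  all_goals subst_vars; linarith

theorem eq_of_mem_canonSet {w : Fin 3 → ℂ} (h : ScaledInvariants w w' k) (hw : w ∈ canonSet)
    (hw' : w' ∈ canonSet) : w' = w := by
  rcases mem_canonSet_iff.mp hw with ⟨t, ht, rfl⟩ | ⟨t, rfl⟩ | rfl | rfl | rfl | rfl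
  exacts [h.eq_family₁ ht hw', h.eq_family₂ hw', h.eq_add_I_smul hw', h.eq_sub_I_smul hw',
    h.eq_ε₃ hw', h.eq_ε₁_add_ε₃ hw']

end ScaledInvariants

theorem orbits_SOplus21_uniqueness (w w' : Fin 3 → ℂ)
    (hw : w ∈ canonSet) (hw' : w' ∈ canonSet)
    (h : ∃ c : ℂ, c ≠ 0 ∧ ∃ A : Matrix (Fin 3) (Fin 3) ℝ, SOplus21 A ∧
      c • actC A w = w') :
    w = w' := by
  obtain ⟨c, hc, A, hA, rfl⟩ := h
  exact ((scaledInvariants_smul_actC hc hA w).eq_of_mem_canonSet hw hw').symm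
end
end

section
/- Let t ∈ (−1,1) with t ≠ 0. If c is a nonzero complex number, A ∈ SO⁺(2,1), and c • (A (ε₁ + i·t·ε₂)) = ε₁ + i·t·ε₂, then either c = 1 and A is the identity matrix, or c = −1 and A = diag(−1,−1,1). (Stabilizer computation for the generic canonical forms ε₁ + i t ε₂ in Proposition A.2: their stabilizer in ℂ^× × SO⁺(2,1) is a group of order two, so the corresponding Lie algebra 𝔫♯ equals ℂ.) -/
/-!
STATEMENT 7 (Proposition A.2 of the paper, stabilizer of the generic canonical forms):
Let `t ∈ (−1,1)`, `t ≠ 0`. If `c ≠ 0` complex, `A ∈ SO⁺(2,1)`, and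
`c • (A (ε₁ + i·t·ε₂)) = ε₁ + i·t·ε₂`, then either `c = 1` and `A = 1`,
or `c = −1` and `A = diag(−1,−1,1)`.
-/

open Matrix

noncomputable section

/-!
`A` preserves the complex-bilinear extension of the Lorentz form `η`, which takes the value
`1 - t² ≠ 0` on `v = ε₁ + i t ε₂`; so `c • A v = v` forces `c² = 1`. Then `c = ±1` is real, and
comparing real and imaginary parts gives `A ε₁ = c ε₁` and `A ε₂ = c ε₂`. The third column of `A`
is `η`-orthogonal to both, hence a multiple of `ε₃` of Lorentz norm `-1`, and `A₃₃ > 0` fixes it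
to be `ε₃`.
-/

open Complex

section

variable {n : Type*} [Fintype n]

theorem dotProduct_mulVec_mulVec_of_transpose_mul_mul_eq {R : Type*} [CommRing R]
    {A J : Matrix n n R} (hA : Aᵀ * J * A = J) (v : n → R) :
    (A *ᵥ v) ⬝ᵥ (J *ᵥ (A *ᵥ v)) = v ⬝ᵥ (J *ᵥ v) :=
  calc (A *ᵥ v) ⬝ᵥ (J *ᵥ (A *ᵥ v)) = (v ᵥ* Aᵀ) ⬝ᵥ ((J * A) *ᵥ v) := by
        rw [vecMul_transpose, mulVec_mulVec]
    _ = v ⬝ᵥ ((Aᵀ * J * A) *ᵥ v) := by rw [← dotProduct_mulVec, mulVec_mulVec, Matrix.mul_assoc]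
    _ = v ⬝ᵥ (J *ᵥ v) := by rw [hA]

theorem sq_eq_one_of_smul_mulVec_eq {K : Type*} [Field K] {A J : Matrix n n K}
    (hA : Aᵀ * J * A = J) {c : K} {v : n → K} (hv : v ⬝ᵥ (J *ᵥ v) ≠ 0)
    (h : c • (A *ᵥ v) = v) : c ^ 2 = 1 := by
  refine mul_right_cancel₀ hv ?_
  calc c ^ 2 * v ⬝ᵥ (J *ᵥ v) = (c • (A *ᵥ v)) ⬝ᵥ (J *ᵥ (c • (A *ᵥ v))) := by
        rw [mulVec_smul, smul_dotProduct, dotProduct_smul,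
          dotProduct_mulVec_mulVec_of_transpose_mul_mul_eq hA, smul_eq_mul, smul_eq_mul]
        ring
    _ = 1 * v ⬝ᵥ (J *ᵥ v) := by rw [h, one_mul]

theorem transpose_map_mul_map_mul_map_eq {R S : Type*} [CommRing R] [CommRing S] (f : R →+* S)
    {A J : Matrix n n R} (hA : Aᵀ * J * A = J) :
    (A.map f)ᵀ * J.map f * A.map f = J.map f := by
  rw [← transpose_map, ← Matrix.map_mul, ← Matrix.map_mul, hA]

end

theorem dotProduct_η_mulVec_ε₁_add_smul_ε₂ (t : ℝ) :
    (ε₁ + (I * t) • ε₂) ⬝ᵥ (η.map ofRealHom *ᵥ (ε₁ + (I * t) • ε₂)) = ((1 - t ^ 2 : ℝ) : ℂ) := by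
  simp [η, ε₁, ε₂, dotProduct, mulVec, Fin.sum_univ_three, mul_mul_mul_comm I, sq, sub_eq_add_neg]

theorem ε₁_add_smul_ε₂_eq_ofReal_add_I_mul (t : ℝ) :
    ε₁ + (I * t) • ε₂ =
      fun i => ((![1, 0, 0] : Fin 3 → ℝ) i : ℂ) + I * (t • ![0, 1, 0] : Fin 3 → ℝ) i := by
  funext i
  fin_cases i <;> simp [ε₁, ε₂]

theorem actC_ofReal_add_I_mul (A : Matrix (Fin 3) (Fin 3) ℝ) (x y : Fin 3 → ℝ) :
    actC A (fun i => x i + I * y i) = fun i => ((A *ᵥ x) i : ℂ) + I * (A *ᵥ y) i := by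
  funext i
  simp only [actC, mulVec, dotProduct, map_apply, Fin.sum_univ_three, ofReal_add, ofReal_mul]
  ring

theorem mulVec_eq_smul_of_actC_eq_smul {A : Matrix (Fin 3) (Fin 3) ℝ} {σ : ℝ} {x y : Fin 3 → ℝ}
    (h : actC A (fun i => x i + I * y i) = (σ : ℂ) • fun i => x i + I * y i) :
    A *ᵥ x = σ • x ∧ A *ᵥ y = σ • y := by
  rw [actC_ofReal_add_I_mul] at h
  constructor <;> funext i
  · simpa using congrArg re (congrFun h i)
  · simpa using congrArg im (congrFun h i)

theorem eq_diagonal_of_mulVec_eq_smul {A : Matrix (Fin 3) (Fin 3) ℝ} (hη : Aᵀ * η * A = η)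
    (hpos : 0 < A 2 2) {σ : ℝ} (h₁ : A *ᵥ ![1, 0, 0] = σ • ![1, 0, 0])
    (h₂ : A *ᵥ ![0, 1, 0] = σ • ![0, 1, 0]) : A = diagonal ![σ, σ, 1] := by
  obtain ⟨h00, h10, h20⟩ : A 0 0 = σ ∧ A 1 0 = 0 ∧ A 2 0 = 0 := by
    simpa [funext_iff, Fin.forall_fin_succ, mulVec, dotProduct, Fin.sum_univ_three] using h₁
  obtain ⟨h01, h11, h21⟩ : A 0 1 = 0 ∧ A 1 1 = σ ∧ A 2 1 = 0 := by
    simpa [funext_iff, Fin.forall_fin_succ, mulVec, dotProduct, Fin.sum_univ_three] using h₂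
  have hη_apply (i j : Fin 3) := congrFun (congrFun hη i) j
  simp only [η, mul_apply, transpose_apply, Fin.sum_univ_three] at hη_apply
  have hσ : σ ≠ 0 := by
    refine left_ne_zero_of_mul_eq_one (b := σ) ?_
    simpa [h00, h10, h20] using hη_apply 0 0
  have h02 : A 0 2 = 0 := by simpa [h00, h10, h20, hσ] using hη_apply 0 2
  have h12 : A 1 2 = 0 := by simpa [h01, h11, h21, hσ] using hη_apply 1 2
  have h22 : A 2 2 = 1 := by
    have : A 2 2 * A 2 2 = 1 := by simpa [h02, h12] using hη_apply 2 2
    nlinarith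
  ext i j
  fin_cases i <;> fin_cases j <;> simp [h00, h10, h20, h01, h11, h21, h02, h12, h22]

theorem stabilizer_generic_SOplus21_general (t : ℝ) (ht : t ∈ Set.Ioo (-1 : ℝ) 1) (ht0 : t ≠ 0)
    (c : ℂ) (A : Matrix (Fin 3) (Fin 3) ℝ) (hA : SOplus21 A)
    (h : c • actC A (ε₁ + (Complex.I * (t : ℂ)) • ε₂) = ε₁ + (Complex.I * (t : ℂ)) • ε₂) :
    (c = 1 ∧ A = 1) ∨ (c = -1 ∧ A = Matrix.diagonal ![-1, -1, 1]) := by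
  obtain ⟨hη, -, hpos⟩ := hA
  have hv : (ε₁ + (I * t) • ε₂) ⬝ᵥ (η.map ofRealHom *ᵥ (ε₁ + (I * t) • ε₂)) ≠ 0 := by
    have : t ^ 2 < 1 := (sq_lt_one_iff_abs_lt_one t).2 (abs_lt.2 ht)
    rw [dotProduct_η_mulVec_ε₁_add_smul_ε₂, ofReal_ne_zero]
    linarith
  have hc : c ^ 2 = 1 :=
    sq_eq_one_of_smul_mulVec_eq (transpose_map_mul_map_mul_map_eq ofRealHom hη) hv h
  have hdiag (σ : ℝ) (hσ : c = σ) : A = diagonal ![σ, σ, 1] := by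
    subst hσ
    have hAv : actC A (ε₁ + (I * t) • ε₂) = (σ : ℂ) • (ε₁ + (I * t) • ε₂) := by
      conv_rhs => rw [← h, smul_smul, ← sq, hc, one_smul]
    rw [ε₁_add_smul_ε₂_eq_ofReal_add_I_mul] at hAv
    obtain ⟨h₁, h₂⟩ := mulVec_eq_smul_of_actC_eq_smul hAv
    rw [mulVec_smul, smul_comm] at h₂
    exact eq_diagonal_of_mulVec_eq_smul hη hpos h₁ (smul_right_injective _ ht0 h₂)
  rcases sq_eq_one_iff.1 hc with rfl | rfl
  · refine .inl ⟨rfl, ?_⟩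
    rw [hdiag 1 (by simp), ← diagonal_one]
    congr
    ext i
    fin_cases i <;> rfl
  · exact .inr ⟨rfl, hdiag (-1) (by simp)⟩

theorem stabilizer_generic_SOplus21 (t : ℝ) (ht : t ∈ Set.Ioo (-1 : ℝ) 1) (ht0 : t ≠ 0)
    (c : ℂ) (hc : c ≠ 0) (A : Matrix (Fin 3) (Fin 3) ℝ) (hA : SOplus21 A)
    (h : c • actC A (ε₁ + (Complex.I * (t : ℂ)) • ε₂) = ε₁ + (Complex.I * (t : ℂ)) • ε₂) :
    (c = 1 ∧ A = 1) ∨ (c = -1 ∧ A = Matrix.diagonal ![-1, -1, 1]) :=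
  stabilizer_generic_SOplus21_general t ht ht0 c A hA h
end
end

section
/- If c is a nonzero complex number, A ∈ SO⁺(2,1), and c • (A ε₃) = ε₃ (where ε₃ ∈ ℂ³), then c = 1, A ε₃ = ε₃, and there exists φ ∈ ℝ such that A = [[cos φ, −sin φ, 0], [sin φ, cos φ, 0], [0, 0, 1]]. (The stabilizer of the time-like canonical form ε₃ in ℂ^× × SO⁺(2,1) is the rotation group SO(2), as asserted in Proposition A.2 and Table 3 of the paper.) -/
/-!
STATEMENT 10 (Proposition A.2 and Table 3 of the paper):
The stabilizer of the time-like canonical form `ε₃` in `ℂ^× × SO⁺(2,1)` is the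
rotation group `SO(2)`.
-/

open Matrix

noncomputable section

/-!
Since `A` preserves `η`, its columns are `η`-orthonormal. If the third column is a multiple of `ε₃`,
it is `ε₃` itself (`A₃₃ > 0` fixes the sign); orthogonality to it then kills the third row, so the
upper-left `2 × 2` block is orthogonal with determinant `1`, i.e. a rotation. The scalar `c` is then
read off the third coordinate of `c • A ε₃ = ε₃`.
-/

lemma transpose_mul_η_mul_apply (A : Matrix (Fin 3) (Fin 3) ℝ) (i j : Fin 3) :
    (Aᵀ * η * A) i j = A 0 i * A 0 j + A 1 i * A 1 j - A 2 i * A 2 j := by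
  simp [η, mul_apply, Fin.sum_univ_three, sub_eq_add_neg]

lemma Real.exists_cos_sin_eq {a b : ℝ} (h : a ^ 2 + b ^ 2 = 1) :
    ∃ φ : ℝ, Real.cos φ = a ∧ Real.sin φ = b := by
  set z : ℂ := ⟨a, b⟩
  have hz : ‖z‖ = 1 := by
    rw [Complex.norm_def, Complex.normSq_apply, Real.sqrt_eq_one]
    linear_combination h
  have hz0 : z ≠ 0 := norm_ne_zero_iff.mp (by rw [hz]; exact one_ne_zero)
  exact ⟨z.arg, by rw [Complex.cos_arg hz0, hz, div_one], by rw [Complex.sin_arg, hz, div_one]⟩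

lemma SOplus21.exists_eq_rotation {A : Matrix (Fin 3) (Fin 3) ℝ} (hA : SOplus21 A)
    (h02 : A 0 2 = 0) (h12 : A 1 2 = 0) :
    ∃ φ : ℝ, A = !![Real.cos φ, -Real.sin φ, 0;
                    Real.sin φ,  Real.cos φ, 0;
                    0, 0, 1] := by
  obtain ⟨hη, hdet, hpos⟩ := hA
  have col (i j : Fin 3) : A 0 i * A 0 j + A 1 i * A 1 j - A 2 i * A 2 j = η i j := by
    rw [← transpose_mul_η_mul_apply, hη]
  have h22 : A 2 2 = 1 := by
    have hsq : A 2 2 ^ 2 = 1 := by simpa [η, h02, h12, sq] using col 2 2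
    exact (pow_eq_one_iff_of_nonneg hpos.le two_ne_zero).mp hsq
  have h20 : A 2 0 = 0 := by simpa [η, h02, h12, h22] using col 0 2
  have h21 : A 2 1 = 0 := by simpa [η, h02, h12, h22] using col 1 2
  have n0 : A 0 0 ^ 2 + A 1 0 ^ 2 = 1 := by simpa [η, h20, sq] using col 0 0
  have o01 : A 0 0 * A 0 1 + A 1 0 * A 1 1 = 0 := by simpa [η, h20, h21] using col 0 1
  have d01 : A 0 0 * A 1 1 - A 0 1 * A 1 0 = 1 := by
    rw [det_fin_three, h02, h12, h20, h21, h22] at hdet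
    linear_combination hdet
  have h01 : A 0 1 = -A 1 0 := by
    linear_combination A 0 0 * o01 - A 1 0 * d01 - A 0 1 * n0
  have h11 : A 1 1 = A 0 0 := by
    linear_combination A 1 0 * o01 + A 0 0 * d01 - A 1 1 * n0
  obtain ⟨φ, hcos, hsin⟩ := Real.exists_cos_sin_eq n0
  refine ⟨φ, ?_⟩
  ext i j
  fin_cases i <;> fin_cases j <;> simp [hcos, hsin, h01, h11, h02, h12, h20, h21, h22]

theorem stabilizer_timelike_SOplus21_general (c : ℂ)
    (A : Matrix (Fin 3) (Fin 3) ℝ) (hA : SOplus21 A)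
    (h : c • actC A ε₃ = ε₃) :
    c = 1 ∧ A.mulVec ![0, 0, 1] = ![0, 0, 1] ∧
      ∃ φ : ℝ, A = !![Real.cos φ, -Real.sin φ, 0;
                      Real.sin φ,  Real.cos φ, 0;
                      0, 0, 1] := by
  have hcol (i : Fin 3) : c * A i 2 = ε₃ i := by
    simpa [actC, ε₃, mulVec, dotProduct, Fin.sum_univ_three] using congrFun h i
  have hc : c ≠ 0 := left_ne_zero_of_mul_eq_one (hcol 2)
  obtain ⟨φ, rfl⟩ := hA.exists_eq_rotation
    (by simpa [ε₃, hc] using hcol 0) (by simpa [ε₃, hc] using hcol 1)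
  refine ⟨by simpa [ε₃] using hcol 2, ?_, φ, rfl⟩
  ext i
  fin_cases i <;> simp [mulVec, dotProduct, Fin.sum_univ_three]

theorem stabilizer_timelike_SOplus21 (c : ℂ) (hc : c ≠ 0)
    (A : Matrix (Fin 3) (Fin 3) ℝ) (hA : SOplus21 A)
    (h : c • actC A ε₃ = ε₃) :
    c = 1 ∧ A.mulVec ![0, 0, 1] = ![0, 0, 1] ∧
      ∃ φ : ℝ, A = !![Real.cos φ, -Real.sin φ, 0;
                      Real.sin φ,  Real.cos φ, 0;
                      0, 0, 1] :=
  stabilizer_timelike_SOplus21_general c A hA h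
end
end

section
/- Let K be a field of characteristic different from 2, V a K-vector space, and β : V × V → K a symmetric bilinear form which is nondegenerate (if β(x,y) = 0 for all y ∈ V then x = 0). Suppose T : V → End_K(V) is a K-linear map satisfying (i) T(u)(v) = T(v)(u) for all u, v ∈ V, and (ii) β(T(u)v, w) + β(v, T(u)w) = 0 for all u, v, w ∈ V. Then T = 0. (The first Cartan prolongation of the orthogonal Lie algebra so(β) of a nondegenerate symmetric bilinear form is trivial; this lemma is the key step in the proof of maximality in Theorem 5.2(v) of the paper.) -/
/-!
The trilinear form `c(u, v, w) = β(T u v, w)` is symmetric in `(u, v)` by (i) and, using the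
symmetry of `β`, skew in `(v, w)` by (ii). A form with these two symmetries is zero: going around
the six permutations of its arguments returns `-c`, so `2c = 0`. Nondegeneracy of `β` then gives
`T u v = 0`.
-/

theorem eq_zero_of_symm_of_antisymm {α R : Type*} [Ring R] [NoZeroDivisors R] (h2 : (2 : R) ≠ 0)
    (c : α → α → α → R) (hsymm : ∀ u v w, c u v w = c v u w)
    (hanti : ∀ u v w, c u v w = -c u w v) (u v w : α) : c u v w = 0 := by
  have hneg : c u v w = -c u v w :=
    calc c u v w = c v u w := hsymm u v w
      _ = -c v w u := hanti v u w
      _ = -c w v u := by rw [hsymm v w]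
      _ = c w u v := by rw [hanti w v u, neg_neg]
      _ = c u w v := hsymm w u v
      _ = -c u v w := by rw [hanti u v w, neg_neg]
  have htwo : 2 * c u v w = 0 := by
    rw [two_mul]
    nth_rewrite 2 [hneg]
    exact add_neg_cancel _
  exact (mul_eq_zero.mp htwo).resolve_left h2

theorem cartan_prolongation_so_trivial (K : Type*) [Field K] (h2 : (2 : K) ≠ 0)
    (V : Type*) [AddCommGroup V] [Module K V]
    (β : V →ₗ[K] V →ₗ[K] K)
    (hsymm : ∀ x y : V, β x y = β y x)
    (hnd : ∀ x : V, (∀ y : V, β x y = 0) → x = 0)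
    (T : V →ₗ[K] Module.End K V)
    (hT1 : ∀ u v : V, T u v = T v u)
    (hT2 : ∀ u v w : V, β (T u v) w + β v (T u w) = 0) :
    T = 0 := by
  have hanti (u v w : V) : β (T u v) w = -β (T u w) v := by
    rw [← hsymm v, eq_neg_iff_add_eq_zero]
    exact hT2 u v w
  ext u v
  exact hnd _ fun w =>
    eq_zero_of_symm_of_antisymm h2 (fun u v w => β (T u v) w) (fun u v w => by rw [hT1]) hanti u v w
end

section
/- Let W = ℂ² × (ℂ²)* and for a complex 2×2 matrix A let ρ(A) be the endomorphism of W given by ρ(A)(z,ξ) = (A z, −ξ ∘ A). If T : W → End_ℂ(W) is a ℂ-linear map such that T(u)(v) = T(v)(u) for all u, v ∈ W, and such that for every u ∈ W there exists a complex 2×2 matrix A with T(u) = ρ(A), then T = 0. (The first Cartan prolongation of the linear Lie algebra ρ(gl₂(ℂ)) ⊆ gl(W) is trivial; this is the conclusion of the maximality argument in the proof of Theorem 5.2(v) of the paper.) -/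
/-!
Write `T (z, 0) = ρ A` and `T (0, ξ) = ρ B`. Since `ρ` preserves both summands of `W`,
the symmetry `T (0, ξ) (z, 0) = T (z, 0) (0, ξ)` equates a vector of `ℂ²` with a covector,
so both sides vanish: `ξ ∘ A = 0` for every `ξ` forces `A = 0`, and then `B z = 0` for every
`z` forces `B = 0`.
-/

open Matrix

noncomputable section

/-- `W = ℂ² × (ℂ²)*`. -/
abbrev W := (Fin 2 → ℂ) × ((Fin 2 → ℂ) →ₗ[ℂ] ℂ)

/-- The representation `ρ(A)(z,ξ) = (A z, −ξ ∘ A)` of `gl₂(ℂ)` on `W`,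
as an endomorphism of `W`. -/
def ρ (A : Matrix (Fin 2) (Fin 2) ℂ) : Module.End ℂ W :=
  (A.mulVecLin).prodMap (-(LinearMap.lcomp ℂ ℂ A.mulVecLin))

lemma ρ_apply_inl (A : Matrix (Fin 2) (Fin 2) ℂ) (z : Fin 2 → ℂ) :
    ρ A (z, 0) = (A *ᵥ z, 0) := by
  simp [ρ]

lemma ρ_apply_inr (A : Matrix (Fin 2) (Fin 2) ℂ) (ξ : (Fin 2 → ℂ) →ₗ[ℂ] ℂ) :
    ρ A (0, ξ) = (0, -(ξ ∘ₗ A.mulVecLin)) := by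
  simp [ρ, LinearMap.lcomp_apply']

lemma ρ_eq_zero_of_mulVec_eq_zero {A : Matrix (Fin 2) (Fin 2) ℂ} (hA : ∀ z, A *ᵥ z = 0) :
    ρ A = 0 := by
  ext u <;> simp [ρ, hA]

section Prolongation

variable {T : W →ₗ[ℂ] Module.End ℂ W} (hsym : ∀ u v : W, T u v = T v u)
  (hval : ∀ u : W, ∃ A : Matrix (Fin 2) (Fin 2) ℂ, T u = ρ A)
include hsym hval

lemma prolongation_apply_inl_eq_zero (z : Fin 2 → ℂ) : T (z, 0) = 0 := by
  obtain ⟨A, hA⟩ := hval (z, 0)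
  have hdual : ∀ ξ : (Fin 2 → ℂ) →ₗ[ℂ] ℂ, ξ ∘ₗ A.mulVecLin = 0 := by
    intro ξ
    obtain ⟨B, hB⟩ := hval (0, ξ)
    have h := hsym (0, ξ) (z, 0)
    rw [hA, hB, ρ_apply_inl, ρ_apply_inr] at h
    simpa using (congrArg Prod.snd h).symm
  refine hA.trans (ρ_eq_zero_of_mulVec_eq_zero fun w => ?_)
  exact (Module.forall_dual_apply_eq_zero_iff ℂ _).mp fun ξ => LinearMap.congr_fun (hdual ξ) w

lemma prolongation_apply_inr_eq_zero (ξ : (Fin 2 → ℂ) →ₗ[ℂ] ℂ) : T (0, ξ) = 0 := by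
  obtain ⟨B, hB⟩ := hval (0, ξ)
  refine hB.trans (ρ_eq_zero_of_mulVec_eq_zero fun w => ?_)
  have h := hsym (0, ξ) (w, 0)
  rw [prolongation_apply_inl_eq_zero hsym hval w, hB, ρ_apply_inl] at h
  exact congrArg Prod.fst h

end Prolongation

theorem cartan_prolongation_rho_gl2_trivial (T : W →ₗ[ℂ] Module.End ℂ W)
    (hsym : ∀ u v : W, T u v = T v u)
    (hval : ∀ u : W, ∃ A : Matrix (Fin 2) (Fin 2) ℂ, T u = ρ A) :
    T = 0 := by
  refine LinearMap.prod_ext (LinearMap.ext fun z => ?_) (LinearMap.ext fun ξ => ?_)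
  · exact prolongation_apply_inl_eq_zero hsym hval z
  · exact prolongation_apply_inr_eq_zero hsym hval ξ
end
end

section
/- Let I = diag(1,−1,−1,−1) and let 𝔤 = su(1,3) = {A a complex 4×4 matrix : Aᴴ I + I A = 0 and tr A = 0} (a real Lie algebra under the commutator bracket, where Aᴴ is the conjugate transpose). Let E = E₁₂ + E₂₁ ∈ 𝔤 (Eᵢⱼ the elementary matrix) and for p ∈ ℤ let 𝔤^p = {X ∈ 𝔤 : [E,X] = p·X}. Then: (i) 𝔤 = 𝔤^{−2} ⊕ 𝔤^{−1} ⊕ 𝔤^0 ⊕ 𝔤^1 ⊕ 𝔤^2 with real dimensions dim 𝔤^{−2} = dim 𝔤^2 = 1, dim 𝔤^{−1} = dim 𝔤^1 = 4 and dim 𝔤^0 = 5; (ii) [𝔤^{−1}, 𝔤^{−1}] = 𝔤^{−2}; (iii) if X ∈ 𝔤^{−1} and [X,Y] = 0 for all Y ∈ 𝔤^{−1}, then X = 0; and (iv) the matrix 𝔍 = diag(0,0,i,−i) lies in 𝔤^0 and satisfies [𝔍,[𝔍,X]] = −X for all X ∈ 𝔤^{−1}. (The depth-2 grading of su(1,3)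 of Table 4 together with the complex structure 𝔍 of Table 5, underlying the su(1,3) model of Theorem 5.2 of the paper.) -/
/-!
STATEMENT 16 (Tables 4 and 5 of the paper; grading underlying the `su(1,3)` model of
Theorem 5.2): the depth-2 grading of `su(1,3)` induced by the grading element
`E = E₁₂ + E₂₁`, together with the complex structure `𝔍 = diag(0,0,i,−i)`.
-/

open Matrix

noncomputable section

/-- 4×4 complex matrices. -/
abbrev M4C := Matrix (Fin 4) (Fin 4) ℂ

/-- The Hermitian form `I = diag(1,−1,−1,−1)` defining `su(1,3)`. -/
def Imat : M4C := Matrix.diagonal ![1, -1, -1, -1]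

/-- The grading element `E = E₁₂ + E₂₁` (1-based indexing of the elementary matrices). -/
def E : M4C := Matrix.single 0 1 (1 : ℂ) + Matrix.single 1 0 (1 : ℂ)

/-- The degree-`p` component `𝔤^p = {X ∈ su(1,3) : [E,X] = p·X}`, a real subspace of
the complex 4×4 matrices. -/
def gdeg (p : ℤ) : Submodule ℝ M4C where
  carrier := {X | Xᴴ * Imat + Imat * X = 0 ∧ X.trace = 0 ∧ E * X - X * E = (p : ℝ) • X}
  add_mem' := by
    rintro X Y ⟨hX1, hX2, hX3⟩ ⟨hY1, hY2, hY3⟩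
    refine ⟨?_, by simp [Matrix.trace_add, hX2, hY2], ?_⟩
    · have h : (X + Y)ᴴ * Imat + Imat * (X + Y)
          = (Xᴴ * Imat + Imat * X) + (Yᴴ * Imat + Imat * Y) := by
        rw [Matrix.conjTranspose_add]; noncomm_ring
      rw [h, hX1, hY1, add_zero]
    · have h : E * (X + Y) - (X + Y) * E = (E * X - X * E) + (E * Y - Y * E) := by
        noncomm_ring
      rw [h, hX3, hY3, smul_add]
  zero_mem' := by simp
  smul_mem' := by
    rintro c X ⟨hX1, hX2, hX3⟩
    refine ⟨?_, by simp [hX2], ?_⟩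
    · rw [Matrix.conjTranspose_smul, star_trivial, Matrix.smul_mul, Matrix.mul_smul,
        ← smul_add, hX1, smul_zero]
    · have h : E * (c • X) - (c • X) * E = c • (E * X - X * E) := by
        rw [Matrix.mul_smul, Matrix.smul_mul, smul_sub]
      rw [h, hX3, smul_comm]

/-- The complex structure `𝔍 = diag(0,0,i,−i)`. -/
def Jmat : M4C := Matrix.diagonal ![0, 0, Complex.I, -Complex.I]

/-!
Each `𝔤^p` lies in the `p`-eigenspace of `ad E`, so the five pieces are independent. In the
light-cone basis `e₀ ± e₁`, where `E = diag(1, −1, 0, 0)`, the pieces are visible: `𝔤^{±2}` is a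
line, `𝔤^{±1} ≅ ℂ²` fills the off-diagonal blocks and `𝔤^0 ≅ ℝ³ × ℂ`. An explicit splitting of
every element of `su(1,3)` into matrices of these shapes gives the decomposition, and together
with independence it shows that every element of `𝔤^p` has the explicit shape, which yields the
dimensions. On `𝔤^{−1} ≅ ℂ²` the bracket is `2 Im⟨v, w⟩` times the generator of `𝔤^{−2}`: it is
onto, and nondegenerate because `Im⟨v, i v⟩ = −|v|²`. Finally `ad 𝔍` multiplies the
off-diagonal blocks by `±i`.
-/

open ComplexConjugate Complex

theorem Submodule.finrank_eq_of_parametrization {K V W : Type*} [Ring K] [AddCommGroup V]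
    [Module K V] [AddCommGroup W] [Module K W] (S : Submodule K V) (c : V →ₗ[K] W) (s : W → V)
    (hs : ∀ w, s w ∈ S) (hcs : ∀ w, c (s w) = w) (hsc : ∀ x ∈ S, s (c x) = x) :
    Module.finrank K S = Module.finrank K W := by
  refine (LinearEquiv.ofBijective (c.domRestrict S)
    ⟨fun x y hxy => Subtype.ext ?_, fun w => ⟨⟨s w, hs w⟩, hcs w⟩⟩).finrank_eq
  rw [← hsc x x.2, ← hsc y y.2]
  exact congrArg s hxy

lemma E_eq : E = !![0, 1, 0, 0; 1, 0, 0, 0; 0, 0, 0, 0; 0, 0, 0, 0] := by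
  ext i j
  fin_cases i <;> fin_cases j <;> simp [E]

lemma conjTranspose_mul_Imat_add_eq_zero_iff {X : M4C} :
    Xᴴ * Imat + Imat * X = 0 ↔ ∀ i j, conj (X i j) * Imat i i + Imat j j * X j i = 0 := by
  rw [← Matrix.ext_iff, forall_comm]
  simp [Imat, Matrix.mul_diagonal, Matrix.diagonal_mul]

lemma mem_gdeg_of_entries {p : ℤ} {X : M4C}
    (hskew : ∀ i j, conj (X i j) * Imat i i + Imat j j * X j i = 0) (htr : X.trace = 0)
    (hE : ∀ i j, (E * X - X * E) i j = (p : ℝ) • X i j) : X ∈ gdeg p :=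
  ⟨conjTranspose_mul_Imat_add_eq_zero_iff.2 hskew, htr, Matrix.ext hE⟩

def adE : Module.End ℝ M4C := LinearMap.mulLeft ℝ E - LinearMap.mulRight ℝ E

lemma gdeg_le_eigenspace (p : ℤ) : gdeg p ≤ adE.eigenspace (p : ℝ) := fun _ hX =>
  Module.End.mem_eigenspace_iff.2 hX.2.2

lemma iSupIndep_gdeg : iSupIndep gdeg :=
  (adE.eigenspaces_iSupIndep.comp Int.cast_injective).mono gdeg_le_eigenspace

lemma eq_of_sum_gdeg_eq {a b c d e a' b' c' d' e' : M4C}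
    (ha : a ∈ gdeg (-2)) (hb : b ∈ gdeg (-1)) (hc : c ∈ gdeg 0) (hd : d ∈ gdeg 1)
    (he : e ∈ gdeg 2) (ha' : a' ∈ gdeg (-2)) (hb' : b' ∈ gdeg (-1)) (hc' : c' ∈ gdeg 0)
    (hd' : d' ∈ gdeg 1) (he' : e' ∈ gdeg 2) (h : a + b + c + d + e = a' + b' + c' + d' + e') :
    a = a' ∧ b = b' ∧ c = c' ∧ d = d' ∧ e = e' := by
  have hinj : Function.Injective fun i : Fin 5 => (i : ℤ) - 2 := fun i j hij => by
    simpa [Fin.ext_iff] using hij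
  have key := (iSupIndep_iff_finsetSum_eq_zero_imp_eq_zero _).1 (iSupIndep_gdeg.comp hinj)
    Finset.univ ![a - a', b - b', c - c', d - d', e - e']
    (fun i _ => by fin_cases i <;> exact sub_mem ‹_› ‹_›)
    (by rw [Fin.sum_univ_five, ← sub_eq_zero.2 h]; simp only [Matrix.cons_val]; abel)
  simpa [Fin.forall_fin_succ, sub_eq_zero] using key

def ofCoordsNegTwo (t : ℝ) : M4C :=
  !![t * I, t * I, 0, 0;
     -(t * I), -(t * I), 0, 0;
     0, 0, 0, 0;
     0, 0, 0, 0]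

def ofCoordsNegOne (v : ℂ × ℂ) : M4C :=
  !![0, 0, v.1, v.2;
     0, 0, -v.1, -v.2;
     conj v.1, conj v.1, 0, 0;
     conj v.2, conj v.2, 0, 0]

def ofCoordsZero (v : ℝ × ℝ × ℝ × ℂ) : M4C :=
  !![v.1 * I, v.2.1, 0, 0;
     v.2.1, v.1 * I, 0, 0;
     0, 0, v.2.2.1 * I, v.2.2.2;
     0, 0, -conj v.2.2.2, -(2 * v.1 + v.2.2.1) * I]

def ofCoordsOne (v : ℂ × ℂ) : M4C :=
  !![0, 0, v.1, v.2;
     0, 0, v.1, v.2;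
     conj v.1, -conj v.1, 0, 0;
     conj v.2, -conj v.2, 0, 0]

def ofCoordsTwo (t : ℝ) : M4C :=
  !![t * I, -(t * I), 0, 0;
     t * I, -(t * I), 0, 0;
     0, 0, 0, 0;
     0, 0, 0, 0]

lemma ofCoordsNegTwo_mem (t : ℝ) : ofCoordsNegTwo t ∈ gdeg (-2) := by
  refine mem_gdeg_of_entries (fun i j => ?_) ?_ (fun i j => ?_)
  · fin_cases i <;> fin_cases j <;> simp [ofCoordsNegTwo, Imat]
  · simp [ofCoordsNegTwo, Matrix.trace, Fin.sum_univ_four]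
  · fin_cases i <;> fin_cases j <;> simp [ofCoordsNegTwo, E_eq] <;> ring

lemma ofCoordsNegOne_mem (v : ℂ × ℂ) : ofCoordsNegOne v ∈ gdeg (-1) := by
  refine mem_gdeg_of_entries (fun i j => ?_) ?_ (fun i j => ?_)
  · fin_cases i <;> fin_cases j <;> simp [ofCoordsNegOne, Imat]
  · simp [ofCoordsNegOne, Matrix.trace, Fin.sum_univ_four]
  · fin_cases i <;> fin_cases j <;> simp [ofCoordsNegOne, E_eq]

lemma ofCoordsZero_mem (v : ℝ × ℝ × ℝ × ℂ) : ofCoordsZero v ∈ gdeg 0 := by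
  refine mem_gdeg_of_entries (fun i j => ?_) ?_ (fun i j => ?_)
  · fin_cases i <;> fin_cases j <;> simp [ofCoordsZero, Imat, map_ofNat]
  · simp [ofCoordsZero, Matrix.trace, Fin.sum_univ_four]; ring
  · fin_cases i <;> fin_cases j <;> simp [ofCoordsZero, E_eq]

lemma ofCoordsOne_mem (v : ℂ × ℂ) : ofCoordsOne v ∈ gdeg 1 := by
  refine mem_gdeg_of_entries (fun i j => ?_) ?_ (fun i j => ?_)
  · fin_cases i <;> fin_cases j <;> simp [ofCoordsOne, Imat]
  · simp [ofCoordsOne, Matrix.trace, Fin.sum_univ_four]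
  · fin_cases i <;> fin_cases j <;> simp [ofCoordsOne, E_eq]

lemma ofCoordsTwo_mem (t : ℝ) : ofCoordsTwo t ∈ gdeg 2 := by
  refine mem_gdeg_of_entries (fun i j => ?_) ?_ (fun i j => ?_)
  · fin_cases i <;> fin_cases j <;> simp [ofCoordsTwo, Imat]
  · simp [ofCoordsTwo, Matrix.trace, Fin.sum_univ_four]
  · fin_cases i <;> fin_cases j <;> simp [ofCoordsTwo, E_eq] <;> ring

/- These coordinates are meaningful only on `su(1,3)`, where `ofCoordsP ∘ coordsP` is the
projection onto `𝔤^p`. -/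

def coordsNegTwo : M4C →ₗ[ℝ] ℝ where
  toFun X := ((X 0 0 + X 0 1 - X 1 0 - X 1 1) / 4).im
  map_add' X Y := by simp; ring
  map_smul' r X := by simp; ring

def coordsNegOne : M4C →ₗ[ℝ] ℂ × ℂ where
  toFun X := ((X 0 2 - X 1 2) / 2, (X 0 3 - X 1 3) / 2)
  map_add' X Y := by ext <;> simp <;> ring
  map_smul' r X := by ext <;> simp <;> ring

def coordsZero : M4C →ₗ[ℝ] ℝ × ℝ × ℝ × ℂ where
  toFun X := (((X 0 0).im + (X 1 1).im) / 2, (X 0 1).re, (X 2 2).im, X 2 3)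
  map_add' X Y := by ext <;> simp; ring
  map_smul' r X := by ext <;> simp; ring

def coordsOne : M4C →ₗ[ℝ] ℂ × ℂ where
  toFun X := ((X 0 2 + X 1 2) / 2, (X 0 3 + X 1 3) / 2)
  map_add' X Y := by ext <;> simp <;> ring
  map_smul' r X := by ext <;> simp <;> ring

def coordsTwo : M4C →ₗ[ℝ] ℝ where
  toFun X := ((X 0 0 - X 0 1 + X 1 0 - X 1 1) / 4).im
  map_add' X Y := by simp; ring
  map_smul' r X := by simp; ring

lemma coordsNegTwo_ofCoordsNegTwo (t : ℝ) : coordsNegTwo (ofCoordsNegTwo t) = t := by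
  simp [coordsNegTwo, ofCoordsNegTwo]; ring

lemma coordsNegOne_ofCoordsNegOne (v : ℂ × ℂ) : coordsNegOne (ofCoordsNegOne v) = v := by
  simp [coordsNegOne, ofCoordsNegOne]

lemma coordsZero_ofCoordsZero (v : ℝ × ℝ × ℝ × ℂ) : coordsZero (ofCoordsZero v) = v := by
  simp [coordsZero, ofCoordsZero]

lemma coordsOne_ofCoordsOne (v : ℂ × ℂ) : coordsOne (ofCoordsOne v) = v := by
  simp [coordsOne, ofCoordsOne]

lemma coordsTwo_ofCoordsTwo (t : ℝ) : coordsTwo (ofCoordsTwo t) = t := by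
  simp [coordsTwo, ofCoordsTwo]; ring

lemma sum_ofCoords_coords {X : M4C} (hskew : Xᴴ * Imat + Imat * X = 0) (htr : X.trace = 0) :
    ofCoordsNegTwo (coordsNegTwo X) + ofCoordsNegOne (coordsNegOne X) +
      ofCoordsZero (coordsZero X) + ofCoordsOne (coordsOne X) + ofCoordsTwo (coordsTwo X) =
      X := by
  have h := conjTranspose_mul_Imat_add_eq_zero_iff.1 hskew
  have h00 := h 0 0; have h11 := h 1 1; have h22 := h 2 2; have h33 := h 3 3
  have h01 := h 0 1; have h02 := h 0 2; have h03 := h 0 3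
  have h12 := h 1 2; have h13 := h 1 3; have h23 := h 2 3
  simp [Imat, Complex.ext_iff] at h00 h11 h22 h33 h01 h02 h03 h12 h13 h23
  obtain ⟨h01, h01'⟩ := h01; obtain ⟨h02, h02'⟩ := h02; obtain ⟨h03, h03'⟩ := h03
  obtain ⟨h12, h12'⟩ := h12; obtain ⟨h13, h13'⟩ := h13; obtain ⟨h23, h23'⟩ := h23
  replace htr := congrArg im htr
  simp [Matrix.trace, Fin.sum_univ_four] at htr
  ext i j
  fin_cases i <;> fin_cases j <;>
    simp [ofCoordsNegTwo, ofCoordsNegOne, ofCoordsZero, ofCoordsOne, ofCoordsTwo, coordsNegTwo,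
      coordsNegOne, coordsZero, coordsOne, coordsTwo, Complex.ext_iff, map_ofNat] <;>
    (try constructor) <;> linarith

section
variable {X : M4C}

lemma ofCoordsNegTwo_coordsNegTwo (hX : X ∈ gdeg (-2)) : ofCoordsNegTwo (coordsNegTwo X) = X :=
  (eq_of_sum_gdeg_eq (ofCoordsNegTwo_mem _) (ofCoordsNegOne_mem _) (ofCoordsZero_mem _)
    (ofCoordsOne_mem _) (ofCoordsTwo_mem _) hX (zero_mem _) (zero_mem _) (zero_mem _)
    (zero_mem _) (by rw [sum_ofCoords_coords hX.1 hX.2.1]; abel)).1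

lemma ofCoordsNegOne_coordsNegOne (hX : X ∈ gdeg (-1)) : ofCoordsNegOne (coordsNegOne X) = X :=
  (eq_of_sum_gdeg_eq (ofCoordsNegTwo_mem _) (ofCoordsNegOne_mem _) (ofCoordsZero_mem _)
    (ofCoordsOne_mem _) (ofCoordsTwo_mem _) (zero_mem _) hX (zero_mem _) (zero_mem _)
    (zero_mem _) (by rw [sum_ofCoords_coords hX.1 hX.2.1]; abel)).2.1

lemma ofCoordsZero_coordsZero (hX : X ∈ gdeg 0) : ofCoordsZero (coordsZero X) = X :=
  (eq_of_sum_gdeg_eq (ofCoordsNegTwo_mem _) (ofCoordsNegOne_mem _) (ofCoordsZero_mem _)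
    (ofCoordsOne_mem _) (ofCoordsTwo_mem _) (zero_mem _) (zero_mem _) hX (zero_mem _)
    (zero_mem _) (by rw [sum_ofCoords_coords hX.1 hX.2.1]; abel)).2.2.1

lemma ofCoordsOne_coordsOne (hX : X ∈ gdeg 1) : ofCoordsOne (coordsOne X) = X :=
  (eq_of_sum_gdeg_eq (ofCoordsNegTwo_mem _) (ofCoordsNegOne_mem _) (ofCoordsZero_mem _)
    (ofCoordsOne_mem _) (ofCoordsTwo_mem _) (zero_mem _) (zero_mem _) (zero_mem _) hX
    (zero_mem _) (by rw [sum_ofCoords_coords hX.1 hX.2.1]; abel)).2.2.2.1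

lemma ofCoordsTwo_coordsTwo (hX : X ∈ gdeg 2) : ofCoordsTwo (coordsTwo X) = X :=
  (eq_of_sum_gdeg_eq (ofCoordsNegTwo_mem _) (ofCoordsNegOne_mem _) (ofCoordsZero_mem _)
    (ofCoordsOne_mem _) (ofCoordsTwo_mem _) (zero_mem _) (zero_mem _) (zero_mem _)
    (zero_mem _) hX (by rw [sum_ofCoords_coords hX.1 hX.2.1]; abel)).2.2.2.2

end

lemma existsUnique_sum_gdeg {X : M4C} (hskew : Xᴴ * Imat + Imat * X = 0) (htr : X.trace = 0) :
    ∃! y : gdeg (-2) × gdeg (-1) × gdeg 0 × gdeg 1 × gdeg 2,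
      X = (y.1 : M4C) + (y.2.1 : M4C) + (y.2.2.1 : M4C) + (y.2.2.2.1 : M4C) +
        (y.2.2.2.2 : M4C) := by
  refine ⟨(⟨_, ofCoordsNegTwo_mem (coordsNegTwo X)⟩, ⟨_, ofCoordsNegOne_mem (coordsNegOne X)⟩,
    ⟨_, ofCoordsZero_mem (coordsZero X)⟩, ⟨_, ofCoordsOne_mem (coordsOne X)⟩,
    ⟨_, ofCoordsTwo_mem (coordsTwo X)⟩), (sum_ofCoords_coords hskew htr).symm, ?_⟩
  rintro ⟨⟨a, ha⟩, ⟨b, hb⟩, ⟨c, hc⟩, ⟨d, hd⟩, ⟨e, he⟩⟩ hsum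
  obtain ⟨rfl, rfl, rfl, rfl, rfl⟩ := eq_of_sum_gdeg_eq ha hb hc hd he (ofCoordsNegTwo_mem _)
    (ofCoordsNegOne_mem _) (ofCoordsZero_mem _) (ofCoordsOne_mem _) (ofCoordsTwo_mem _)
    (hsum.symm.trans (sum_ofCoords_coords hskew htr).symm)
  rfl

lemma finrank_gdeg_negTwo : Module.finrank ℝ (gdeg (-2)) = 1 := by
  rw [Submodule.finrank_eq_of_parametrization _ coordsNegTwo ofCoordsNegTwo ofCoordsNegTwo_mem
    coordsNegTwo_ofCoordsNegTwo fun _ => ofCoordsNegTwo_coordsNegTwo, Module.finrank_self]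

lemma finrank_gdeg_negOne : Module.finrank ℝ (gdeg (-1)) = 4 := by
  rw [Submodule.finrank_eq_of_parametrization _ coordsNegOne ofCoordsNegOne ofCoordsNegOne_mem
    coordsNegOne_ofCoordsNegOne fun _ => ofCoordsNegOne_coordsNegOne]
  simp [Module.finrank_prod, Complex.finrank_real_complex]

lemma finrank_gdeg_zero : Module.finrank ℝ (gdeg 0) = 5 := by
  rw [Submodule.finrank_eq_of_parametrization _ coordsZero ofCoordsZero ofCoordsZero_mem
    coordsZero_ofCoordsZero fun _ => ofCoordsZero_coordsZero]
  simp [Module.finrank_prod, Complex.finrank_real_complex]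

lemma finrank_gdeg_one : Module.finrank ℝ (gdeg 1) = 4 := by
  rw [Submodule.finrank_eq_of_parametrization _ coordsOne ofCoordsOne ofCoordsOne_mem
    coordsOne_ofCoordsOne fun _ => ofCoordsOne_coordsOne]
  simp [Module.finrank_prod, Complex.finrank_real_complex]

lemma finrank_gdeg_two : Module.finrank ℝ (gdeg 2) = 1 := by
  rw [Submodule.finrank_eq_of_parametrization _ coordsTwo ofCoordsTwo ofCoordsTwo_mem
    coordsTwo_ofCoordsTwo fun _ => ofCoordsTwo_coordsTwo, Module.finrank_self]

lemma ofCoordsNegOne_commutator (v w : ℂ × ℂ) :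
    ofCoordsNegOne v * ofCoordsNegOne w - ofCoordsNegOne w * ofCoordsNegOne v =
      ofCoordsNegTwo (2 * (v.1 * conj w.1 + v.2 * conj w.2).im) := by
  ext i j
  fin_cases i <;> fin_cases j <;> simp [ofCoordsNegOne, ofCoordsNegTwo, Complex.ext_iff] <;>
    ring_nf <;> simp

lemma span_commutator_gdeg_negOne :
    Submodule.span ℝ {Z : M4C | ∃ X ∈ gdeg (-1), ∃ Y ∈ gdeg (-1), Z = X * Y - Y * X} =
      gdeg (-2) := by
  refine le_antisymm (Submodule.span_le.2 ?_) fun X hX => Submodule.subset_span ?_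
  · rintro _ ⟨X, hX, Y, hY, rfl⟩
    rw [← ofCoordsNegOne_coordsNegOne hX, ← ofCoordsNegOne_coordsNegOne hY,
      ofCoordsNegOne_commutator]
    exact ofCoordsNegTwo_mem _
  · obtain ⟨t, rfl⟩ : ∃ t, ofCoordsNegTwo t = X := ⟨_, ofCoordsNegTwo_coordsNegTwo hX⟩
    refine ⟨ofCoordsNegOne (1, 0), ofCoordsNegOne_mem _,
      ofCoordsNegOne (-(t / 2 : ℝ) * I, 0), ofCoordsNegOne_mem _, ?_⟩
    rw [ofCoordsNegOne_commutator]
    congr 1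
    simp [map_ofNat]
    ring

lemma im_mul_conj_I_mul (z : ℂ) : (z * conj (I * z)).im = -normSq z := by
  simp [normSq_apply]

lemma eq_zero_of_forall_commutator_eq_zero {X : M4C} (hX : X ∈ gdeg (-1))
    (hcomm : ∀ Y ∈ gdeg (-1), X * Y - Y * X = 0) : X = 0 := by
  obtain ⟨v, rfl⟩ : ∃ v, ofCoordsNegOne v = X := ⟨_, ofCoordsNegOne_coordsNegOne hX⟩
  have h := congrArg coordsNegTwo <|
    hcomm (ofCoordsNegOne (I * v.1, I * v.2)) (ofCoordsNegOne_mem _)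
  rw [ofCoordsNegOne_commutator, coordsNegTwo_ofCoordsNegTwo, map_zero] at h
  simp only [Complex.add_im, im_mul_conj_I_mul] at h
  have h1 : v.1 = 0 := normSq_eq_zero.1 (by linarith [normSq_nonneg v.1, normSq_nonneg v.2])
  have h2 : v.2 = 0 := normSq_eq_zero.1 (by linarith [normSq_nonneg v.1, normSq_nonneg v.2])
  rw [show v = coordsNegOne 0 by simp [Prod.ext_iff, h1, h2],
    ofCoordsNegOne_coordsNegOne (zero_mem _)]

lemma Jmat_eq : Jmat = ofCoordsZero (0, 0, 1, 0) := by
  ext i j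
  fin_cases i <;> fin_cases j <;> simp [Jmat, ofCoordsZero]

lemma Jmat_commutator_commutator (v : ℂ × ℂ) :
    Jmat * (Jmat * ofCoordsNegOne v - ofCoordsNegOne v * Jmat) -
      (Jmat * ofCoordsNegOne v - ofCoordsNegOne v * Jmat) * Jmat = -ofCoordsNegOne v := by
  rw [Jmat_eq]
  ext i j
  fin_cases i <;> fin_cases j <;> simp [ofCoordsZero, ofCoordsNegOne] <;> ring_nf <;> simp

theorem su13_grading :
    -- (i) direct sum decomposition of su(1,3), with the real dimensions of the summands
    ((∀ X : M4C, Xᴴ * Imat + Imat * X = 0 → X.trace = 0 →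
        ∃! y : gdeg (-2) × gdeg (-1) × gdeg 0 × gdeg 1 × gdeg 2,
          X = (y.1 : M4C) + (y.2.1 : M4C) + (y.2.2.1 : M4C) + (y.2.2.2.1 : M4C) +
            (y.2.2.2.2 : M4C)) ∧
      Module.finrank ℝ (gdeg (-2)) = 1 ∧ Module.finrank ℝ (gdeg 2) = 1 ∧
      Module.finrank ℝ (gdeg (-1)) = 4 ∧ Module.finrank ℝ (gdeg 1) = 4 ∧
      Module.finrank ℝ (gdeg 0) = 5) ∧
    -- (ii) [𝔤^{−1}, 𝔤^{−1}] = 𝔤^{−2}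
    (Submodule.span ℝ {Z : M4C | ∃ X ∈ gdeg (-1), ∃ Y ∈ gdeg (-1), Z = X * Y - Y * X}
      = gdeg (-2)) ∧
    -- (iii) nondegeneracy
    (∀ X ∈ gdeg (-1), (∀ Y ∈ gdeg (-1), X * Y - Y * X = 0) → X = 0) ∧
    -- (iv) the complex structure 𝔍 on 𝔤^{−1}
    (Jmat ∈ gdeg 0 ∧ ∀ X ∈ gdeg (-1),
      Jmat * (Jmat * X - X * Jmat) - (Jmat * X - X * Jmat) * Jmat = -X) := by
  refine ⟨⟨fun X => existsUnique_sum_gdeg, finrank_gdeg_negTwo, finrank_gdeg_two,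
    finrank_gdeg_negOne, finrank_gdeg_one, finrank_gdeg_zero⟩, span_commutator_gdeg_negOne,
    fun X => eq_zero_of_forall_commutator_eq_zero, Jmat_eq ▸ ofCoordsZero_mem _, fun X hX => ?_⟩
  rw [← ofCoordsNegOne_coordsNegOne hX]
  exact Jmat_commutator_commutator _
end
end
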